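/- arXiv:2510.18607 — 5 statements merged into one kernel-verified Lean document; each statement's English description precedes it below -/
import Mathlib

section
/- Suppose k and ℓ are lines in ℍ^n and the angle between them is π/3. Then there is a unique line m contained in the two-dimensional ℍ-subspace spanned by k and ℓ that is at angle π/3 to both k and ℓ. -/
/-!
Rescaling `w` by a quaternion changes neither `lineOf w` nor the plane, so we may assume
`|w| = |v|` and `⟨v, w⟩ = -|v|² / 2`. The line through `v + w` is then at angle `π / 3` to both.
Conversely, for `x = v c + w d` the two angle conditions read
`‖2c - d‖² = ‖2d - c‖² = ‖c‖² + ‖d‖² - ⟪c, d⟫` in the real inner product space `ℍ`, which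
forces `‖c - d‖² = 0`, i.e. `x = (v + w) c`.
-/

noncomputable section

local notation "ℍ" => Quaternion ℝ

/-- The standard Hermitian form on `ℍⁿ`, conjugate-linear in the first variable and
ℍ-linear in the second: `⟨x,y⟩ = ∑ i, star (x i) * y i`. -/
def qInner {n : ℕ} (x y : Fin n → ℍ) : ℍ := ∑ i, star (x i) * y i

/-- The norm `|v| = √⟨v,v⟩` on `ℍⁿ`. -/
def qNorm {n : ℕ} (v : Fin n → ℍ) : ℝ := Real.sqrt (qInner v v).re

/-- The ℍ-line `vℍ` spanned by `v` (the set of right scalar multiples of `v`). -/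
def lineOf {n : ℕ} (v : Fin n → ℍ) : Set (Fin n → ℍ) := {w | ∃ c : ℍ, w = fun i => v i * c}

/-- `ℓ` and `ℓ'` are at angle `θ ∈ [0, π/2]`: for all nonzero `v ∈ ℓ`, `w ∈ ℓ'`,
`|⟨v,w⟩| = cos θ · |v|·|w|`. -/
def atAngle {n : ℕ} (ℓ ℓ' : Set (Fin n → ℍ)) (θ : ℝ) : Prop :=
  ∀ v ∈ ℓ, ∀ w ∈ ℓ', v ≠ 0 → w ≠ 0 → ‖qInner v w‖ = Real.cos θ * (qNorm v * qNorm w)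

/-- The two-dimensional right ℍ-subspace spanned by `v` and `w`, as a set. -/
def planeOf {n : ℕ} (v w : Fin n → ℍ) : Set (Fin n → ℍ) :=
  {x | ∃ c d : ℍ, x = (fun i => v i * c) + fun i => w i * d}

lemma star_mul_self_eq_coe_sq (a : ℍ) : star a * a = ((‖a‖ ^ 2 : ℝ) : ℍ) := by
  rw [Quaternion.star_mul_self, Quaternion.normSq_eq_norm_mul_self, sq]

lemma mul_star_self_eq_coe_sq (a : ℍ) : a * star a = ((‖a‖ ^ 2 : ℝ) : ℍ) := by
  rw [Quaternion.self_mul_star, Quaternion.normSq_eq_norm_mul_self, sq]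

lemma re_star_mul (c d : ℍ) : (star c * d).re = inner ℝ c d := by
  simp only [Quaternion.inner_def, Quaternion.re_mul, Quaternion.re_star, Quaternion.imI_star,
    Quaternion.imJ_star, Quaternion.imK_star]
  ring

lemma eq_of_norm_two_smul_sub_sq {E : Type*} [NormedAddCommGroup E] [InnerProductSpace ℝ E]
    {c d : E} (hc : ‖(2 : ℝ) • c - d‖ ^ 2 = ‖c‖ ^ 2 + ‖d‖ ^ 2 - inner ℝ c d)
    (hd : ‖(2 : ℝ) • d - c‖ ^ 2 = ‖c‖ ^ 2 + ‖d‖ ^ 2 - inner ℝ c d) : c = d := by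
  rw [norm_sub_sq_real, norm_smul, real_inner_smul_left] at hc hd
  rw [real_inner_comm] at hd
  rw [← sub_eq_zero, ← norm_eq_zero, ← sq_eq_zero_iff, norm_sub_sq_real]
  norm_num at hc hd
  linarith

section QuaternionicGeometry

variable {n : ℕ}

lemma qInner_add_left (x y w : Fin n → ℍ) : qInner (x + y) w = qInner x w + qInner y w := by
  simp only [qInner, Pi.add_apply, star_add, add_mul, Finset.sum_add_distrib]

lemma qInner_add_right (v x y : Fin n → ℍ) : qInner v (x + y) = qInner v x + qInner v y := by
  simp only [qInner, Pi.add_apply, mul_add, Finset.sum_add_distrib]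

lemma qInner_mul_right (v w : Fin n → ℍ) (c : ℍ) :
    qInner v (fun i => w i * c) = qInner v w * c := by
  simp only [qInner, Finset.sum_mul, mul_assoc]

lemma qInner_mul_left (v w : Fin n → ℍ) (c : ℍ) :
    qInner (fun i => v i * c) w = star c * qInner v w := by
  simp only [qInner, Finset.mul_sum, star_mul, mul_assoc]

lemma star_qInner (v w : Fin n → ℍ) : star (qInner v w) = qInner w v := by
  simp only [qInner, star_sum, star_mul, star_star]

lemma qInner_self_eq_sum (v : Fin n → ℍ) : qInner v v = ((∑ i, ‖v i‖ ^ 2 : ℝ) : ℍ) := by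
  simp only [qInner, star_mul_self_eq_coe_sq]
  exact (map_sum (algebraMap ℝ ℍ) _ _).symm

lemma qNorm_eq_sqrt (v : Fin n → ℍ) : qNorm v = √(∑ i, ‖v i‖ ^ 2) := by
  rw [qNorm, qInner_self_eq_sum, Quaternion.re_coe]

lemma qNorm_sq (v : Fin n → ℍ) : qNorm v ^ 2 = ∑ i, ‖v i‖ ^ 2 := by
  rw [qNorm_eq_sqrt, Real.sq_sqrt (by positivity)]

lemma qInner_self (v : Fin n → ℍ) : qInner v v = ((qNorm v ^ 2 : ℝ) : ℍ) := by
  rw [qNorm_sq, qInner_self_eq_sum]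

lemma qNorm_sq_eq_re (v : Fin n → ℍ) : qNorm v ^ 2 = (qInner v v).re := by
  rw [qInner_self, Quaternion.re_coe]

lemma re_qInner_mul_right_mul_right {u u' : Fin n → ℍ} {r : ℝ} (h : qInner u u' = r) (c d : ℍ) :
    (qInner (fun i => u i * c) (fun i => u' i * d)).re = r * inner ℝ c d := by
  rw [qInner_mul_left, qInner_mul_right, h, Quaternion.coe_mul_eq_smul, mul_smul_comm,
    Quaternion.re_smul, re_star_mul, smul_eq_mul]

lemma qNorm_nonneg (v : Fin n → ℍ) : 0 ≤ qNorm v := Real.sqrt_nonneg _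

@[simp]
lemma qNorm_zero : qNorm (0 : Fin n → ℍ) = 0 := by simp [qNorm_eq_sqrt]

lemma qNorm_pos {v : Fin n → ℍ} (hv : v ≠ 0) : 0 < qNorm v := by
  obtain ⟨i, hi⟩ := Function.ne_iff.mp hv
  rw [qNorm_eq_sqrt, Real.sqrt_pos]
  exact Finset.sum_pos' (fun j _ => sq_nonneg _) ⟨i, Finset.mem_univ i, by positivity⟩

lemma qNorm_mul_right (v : Fin n → ℍ) (c : ℍ) : qNorm (fun i => v i * c) = qNorm v * ‖c‖ := by
  simp only [qNorm_eq_sqrt, norm_mul, mul_pow, ← Finset.sum_mul]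
  rw [Real.sqrt_mul (by positivity), Real.sqrt_sq (norm_nonneg c)]

lemma mem_lineOf_self (v : Fin n → ℍ) : v ∈ lineOf v := ⟨1, by simp⟩

lemma lineOf_mul_right (v : Fin n → ℍ) {c : ℍ} (hc : c ≠ 0) :
    lineOf (fun i => v i * c) = lineOf v := by
  ext x
  constructor
  · rintro ⟨e, rfl⟩
    exact ⟨c * e, by simp only [mul_assoc]⟩
  · rintro ⟨e, rfl⟩
    exact ⟨c⁻¹ * e, by simp only [mul_assoc, mul_inv_cancel_left₀ hc]⟩

lemma planeOf_mul_right (v w : Fin n → ℍ) {d : ℍ} (hd : d ≠ 0) :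
    planeOf v (fun i => w i * d) = planeOf v w := by
  ext x
  constructor
  · rintro ⟨a, b, rfl⟩
    exact ⟨a, d * b, by simp only [mul_assoc]⟩
  · rintro ⟨a, b, rfl⟩
    exact ⟨a, d⁻¹ * b, by simp only [mul_assoc, mul_inv_cancel_left₀ hd]⟩

lemma atAngle_lineOf_iff (v w : Fin n → ℍ) (θ : ℝ) :
    atAngle (lineOf v) (lineOf w) θ ↔
      (v ≠ 0 → w ≠ 0 → ‖qInner v w‖ = Real.cos θ * (qNorm v * qNorm w)) := by
  refine ⟨fun h hv hw => h v (mem_lineOf_self v) w (mem_lineOf_self w) hv hw, ?_⟩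
  rintro h _ ⟨c, rfl⟩ _ ⟨d, rfl⟩ hvc hwd
  have hv : v ≠ 0 := fun hv => hvc (funext fun i => by simp [hv])
  have hw : w ≠ 0 := fun hw => hwd (funext fun i => by simp [hw])
  rw [qInner_mul_left, qInner_mul_right, norm_mul, norm_mul, norm_star, h hv hw,
    qNorm_mul_right, qNorm_mul_right]
  ring

lemma exists_mul_right_qNorm_eq_qInner_eq_neg_real {v w : Fin n → ℍ} (hw : w ≠ 0)
    (hvw : qInner v w ≠ 0) :
    ∃ d ≠ 0, qNorm (fun i => w i * d) = qNorm v ∧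
      qInner v (fun i => w i * d) = ((-(‖qInner v w‖ * qNorm v / qNorm w) : ℝ) : ℍ) := by
  have hb := qNorm_pos hw
  have hp : 0 < ‖qInner v w‖ := norm_pos_iff.mpr hvw
  refine ⟨-(qNorm v / (qNorm w * ‖qInner v w‖)) • star (qInner v w), ?_, ?_, ?_⟩
  · have hv : v ≠ 0 := by rintro rfl; simp [qInner] at hvw
    have := qNorm_pos hv
    exact smul_ne_zero (neg_ne_zero.mpr (by positivity)) (star_ne_zero.mpr hvw)
  · rw [qNorm_mul_right, norm_smul, norm_star, norm_neg, Real.norm_eq_abs,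
      abs_of_nonneg (by have := qNorm_nonneg v; positivity)]
    field_simp
  · rw [qInner_mul_right, mul_smul_comm, mul_star_self_eq_coe_sq, Quaternion.smul_coe]
    congr 1
    field_simp

end QuaternionicGeometry

/-- `v` and `w` are placed like the simple roots of the root system `A₂`. -/
def IsA2SimpleRoots {n : ℕ} (v w : Fin n → ℍ) : Prop :=
  qNorm w = qNorm v ∧ qInner v w = ((-(qNorm v ^ 2 / 2) : ℝ) : ℍ)

namespace IsA2SimpleRoots

variable {n : ℕ} {v w : Fin n → ℍ}

lemma qInner_comb_left (h : IsA2SimpleRoots v w) (c d : ℍ) :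
    qInner ((fun i => v i * c) + fun i => w i * d) v
      = (qNorm v ^ 2 / 2) • star ((2 : ℝ) • c - d) := by
  rw [qInner_add_left, qInner_mul_left, qInner_mul_left, qInner_self, ← star_qInner, h.2,
    Quaternion.star_coe, Quaternion.mul_coe_eq_smul, Quaternion.mul_coe_eq_smul, star_sub,
    Quaternion.star_smul]
  module

lemma qInner_comb_right (h : IsA2SimpleRoots v w) (c d : ℍ) :
    qInner ((fun i => v i * c) + fun i => w i * d) w
      = (qNorm v ^ 2 / 2) • star ((2 : ℝ) • d - c) := by
  rw [qInner_add_left, qInner_mul_left, qInner_mul_left, qInner_self, h.1, h.2,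
    Quaternion.mul_coe_eq_smul, Quaternion.mul_coe_eq_smul, star_sub, Quaternion.star_smul]
  module

lemma qNorm_comb_sq (h : IsA2SimpleRoots v w) (c d : ℍ) :
    qNorm ((fun i => v i * c) + fun i => w i * d) ^ 2
      = qNorm v ^ 2 * (‖c‖ ^ 2 + ‖d‖ ^ 2 - inner ℝ c d) := by
  have hwv : qInner w v = ((-(qNorm v ^ 2 / 2) : ℝ) : ℍ) := by
    rw [← star_qInner, h.2, Quaternion.star_coe]
  rw [qNorm_sq_eq_re, qInner_add_left, qInner_add_right, qInner_add_right]
  simp only [Quaternion.re_add, re_qInner_mul_right_mul_right (qInner_self v),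
    re_qInner_mul_right_mul_right (qInner_self w), re_qInner_mul_right_mul_right h.2,
    re_qInner_mul_right_mul_right hwv, real_inner_self_eq_norm_sq, real_inner_comm c d, h.1]
  ring

lemma eq_of_norm_qInner_eq_half (h : IsA2SimpleRoots v w) (hv : v ≠ 0) {c d : ℍ}
    (hcv : ‖qInner ((fun i => v i * c) + fun i => w i * d) v‖
      = 1 / 2 * (qNorm ((fun i => v i * c) + fun i => w i * d) * qNorm v))
    (hcw : ‖qInner ((fun i => v i * c) + fun i => w i * d) w‖
      = 1 / 2 * (qNorm ((fun i => v i * c) + fun i => w i * d) * qNorm w)) :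
    c = d := by
  have ha := qNorm_pos hv
  have norm_sq_of_eq {e : ℍ}
      (he : ‖(qNorm v ^ 2 / 2) • star e‖
        = 1 / 2 * (qNorm ((fun i => v i * c) + fun i => w i * d) * qNorm v)) :
      ‖e‖ ^ 2 = ‖c‖ ^ 2 + ‖d‖ ^ 2 - inner ℝ c d := by
    have he2 := congrArg (· ^ 2) he
    simp only [norm_smul, norm_star, Real.norm_eq_abs, mul_pow, h.qNorm_comb_sq, sq_abs] at he2
    have ha4 : qNorm v ^ 4 ≠ 0 := by positivity
    apply mul_left_cancel₀ ha4
    linear_combination 4 * he2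
  rw [h.qInner_comb_left] at hcv
  rw [h.qInner_comb_right, h.1] at hcw
  exact eq_of_norm_two_smul_sub_sq (norm_sq_of_eq hcv) (norm_sq_of_eq hcw)

lemma qInner_add_left (h : IsA2SimpleRoots v w) :
    qInner (v + w) v = ((qNorm v ^ 2 / 2 : ℝ) : ℍ) := by
  rw [_root_.qInner_add_left, qInner_self, ← star_qInner, h.2, Quaternion.star_coe,
    ← Quaternion.coe_add]
  ring_nf

lemma qInner_add_right (h : IsA2SimpleRoots v w) :
    qInner (v + w) w = ((qNorm v ^ 2 / 2 : ℝ) : ℍ) := by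
  rw [_root_.qInner_add_left, qInner_self, h.1, h.2, ← Quaternion.coe_add]
  ring_nf

lemma qNorm_add (h : IsA2SimpleRoots v w) : qNorm (v + w) = qNorm v := by
  have hsq : qNorm (v + w) ^ 2 = qNorm v ^ 2 := by
    rw [qNorm_sq_eq_re, _root_.qInner_add_right, h.qInner_add_left, h.qInner_add_right,
      ← Quaternion.coe_add, Quaternion.re_coe]
    ring
  exact (sq_eq_sq₀ (qNorm_nonneg _) (qNorm_nonneg _)).1 hsq

lemma atAngle_add_left (h : IsA2SimpleRoots v w) :
    atAngle (lineOf (v + w)) (lineOf v) (Real.pi / 3) := by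
  refine (atAngle_lineOf_iff _ _ _).2 fun _ _ => ?_
  rw [h.qInner_add_left, h.qNorm_add, Quaternion.norm_coe, Real.norm_eq_abs,
    abs_of_nonneg (by positivity), Real.cos_pi_div_three]
  ring

lemma atAngle_add_right (h : IsA2SimpleRoots v w) :
    atAngle (lineOf (v + w)) (lineOf w) (Real.pi / 3) := by
  refine (atAngle_lineOf_iff _ _ _).2 fun _ _ => ?_
  rw [h.qInner_add_right, h.qNorm_add, h.1, Quaternion.norm_coe, Real.norm_eq_abs,
    abs_of_nonneg (by positivity), Real.cos_pi_div_three]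
  ring

lemma add_ne_zero (h : IsA2SimpleRoots v w) (hv : v ≠ 0) : v + w ≠ 0 := by
  intro h0
  have := qNorm_pos hv
  rw [← h.qNorm_add, h0, qNorm_zero] at this
  exact this.false

theorem existsUnique_line_atAngle_pi_div_three (h : IsA2SimpleRoots v w) (hv : v ≠ 0) :
    ∃! m : Set (Fin n → ℍ),
      (∃ u : Fin n → ℍ, u ≠ 0 ∧ m = lineOf u) ∧ m ⊆ planeOf v w ∧
      atAngle m (lineOf v) (Real.pi / 3) ∧ atAngle m (lineOf w) (Real.pi / 3) := by
  have hw : w ≠ 0 := fun hw => (qNorm_pos hv).ne' (by rw [← h.1, hw, qNorm_zero])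
  refine ⟨lineOf (v + w), ⟨⟨v + w, h.add_ne_zero hv, rfl⟩, ?_, h.atAngle_add_left,
    h.atAngle_add_right⟩, ?_⟩
  · rintro _ ⟨c, rfl⟩
    exact ⟨c, c, by funext i; simp [add_mul]⟩
  · rintro _ ⟨⟨u, hu, rfl⟩, hsub, hmv, hmw⟩
    obtain ⟨c, d, rfl⟩ := hsub (mem_lineOf_self u)
    rw [atAngle_lineOf_iff, Real.cos_pi_div_three] at hmv hmw
    obtain rfl : c = d := h.eq_of_norm_qInner_eq_half hv (hmv hu hv) (hmw hu hw)
    have hc : c ≠ 0 := by rintro rfl; exact hu (by funext i; simp)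
    have hu' : ((fun i => v i * c) + fun i => w i * c) = fun i => (v + w) i * c := by
      funext i; simp [add_mul]
    rw [hu', lineOf_mul_right _ hc]

end IsA2SimpleRoots

/-- If lines `k = vℍ` and `ℓ = wℍ` in `ℍⁿ` are at angle `π/3`, then there is a unique
line `m` contained in the two-dimensional ℍ-subspace spanned by `k` and `ℓ` that is at
angle `π/3` to both `k` and `ℓ`. -/
theorem unique_third_line_of_star (n : ℕ) (v w : Fin n → ℍ) (hv : v ≠ 0) (hw : w ≠ 0)
    (h : atAngle (lineOf v) (lineOf w) (Real.pi / 3)) :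
    ∃! m : Set (Fin n → ℍ),
      (∃ u : Fin n → ℍ, u ≠ 0 ∧ m = lineOf u) ∧ m ⊆ planeOf v w ∧
      atAngle m (lineOf v) (Real.pi / 3) ∧ atAngle m (lineOf w) (Real.pi / 3) := by
  have ha := qNorm_pos hv
  have hb := qNorm_pos hw
  have hvw : ‖qInner v w‖ = 1 / 2 * (qNorm v * qNorm w) := by
    rw [← Real.cos_pi_div_three]
    exact (atAngle_lineOf_iff v w _).1 h hv hw
  have hvw0 : qInner v w ≠ 0 := by
    rw [← norm_pos_iff, hvw]
    positivity
  obtain ⟨d, hd, hnorm, hinner⟩ := exists_mul_right_qNorm_eq_qInner_eq_neg_real hw hvw0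
  have hA2 : IsA2SimpleRoots v (fun i => w i * d) := by
    refine ⟨hnorm, ?_⟩
    rw [hinner, hvw]
    congr 2
    field_simp
  rw [← lineOf_mul_right w hd, ← planeOf_mul_right v w hd]
  exact hA2.existsUnique_line_atAngle_pi_div_three hv
end
end

section
/- Let Γ ≤ ℍ^× be a finite subgroup and n ≥ 2. Each element w ∈ W_n(Γ) may be written uniquely as a product w = x·v, where v lies in the copy of W_{n−1}(Γ) fixing the last standard basis vector e_n, and x belongs to the set {1} ∪ {γ_n (m n) γ_n^{−1} : 1 ≤ m < n, γ ∈ Γ} ∪ {γ_n : γ ∈ Γ, γ ≠ 1}, where γ_n denotes the diagonal matrix with γ in the n-th position and 1 elsewhere, and (m n) is the permutation matrix of the transposition of m and n. Moreover the fixed space of w equals the intersection of the fixed spaces of x and v, and codim fix(w) = codim fix(x) + codim fix(v). -/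
/-!
Every element of `W_n(Γ)` is a monomial matrix, so it sends `e_n` to `c e_j` for some `c ∈ Γ`;
the coset representatives are indexed by exactly these columns, which gives the factorization
`w = x v` and its uniqueness. The stabilizer element `v` preserves the last coordinate, while `x`
fixes every vector whose last coordinate it preserves: so `x v u = u` forces `x` to fix `v u`,
whence `v u = u`, and `fix(w) = fix(x) ∩ fix(v)`. Finally `fix(x) + ℍ e_n` is all of `ℍⁿ` and
`e_n ∈ fix(v)`, so `fix(x) + fix(v) = ℍⁿ` and the codimensions add.
-/

noncomputable section

local notation "ℍ" => Quaternion ℝ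

/-- The fixed subspace `fix(w) = ker(w − 1) = {x | w·x = x}` of a matrix acting on the
right ℍ-vector space `ℍⁿ` by left multiplication, as a right ℍ-subspace
(a submodule over `ℍᵐᵒᵖ`). -/
def fixSpace {n : ℕ} (w : Matrix (Fin n) (Fin n) ℍ) : Submodule ℍᵐᵒᵖ (Fin n → ℍ) where
  carrier := {x | w.mulVec x = x}
  add_mem' := by
    intro a b ha hb
    simp only [Set.mem_setOf_eq] at *
    rw [Matrix.mulVec_add, ha, hb]
  zero_mem' := by simp [Set.mem_setOf_eq]
  smul_mem' := by
    intro c x hx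
    simp only [Set.mem_setOf_eq] at *
    rw [Matrix.mulVec_smul, hx]

/-- `codim fix(w) = n − dim_ℍ fix(w)`. -/
def codimFix {n : ℕ} (w : Matrix (Fin n) (Fin n) ℍ) : ℕ :=
  n - Module.finrank ℍᵐᵒᵖ (fixSpace w)

/-- The permutation matrix of `σ`, acting on column vectors by `(P x) i = x (σ i)`. -/
def permMat {n : ℕ} (σ : Equiv.Perm (Fin n)) : Matrix (Fin n) (Fin n) ℍ :=
  Matrix.of fun i j => if σ i = j then 1 else 0

/-- The quaternionic reflection group `W_n(Γ,Δ)`: the subgroup of `GL_n(ℍ)` generated by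
the permutation matrices together with the diagonal matrices `diag(γ₁,…,γ_n)` with all
`γ i ∈ Γ` and `γ₁γ₂⋯γ_n ∈ Δ`. -/
def Wgrp (n : ℕ) (Γ Δ : Subgroup ℍˣ) : Subgroup (Matrix (Fin n) (Fin n) ℍ)ˣ :=
  Subgroup.closure
    {g | (∃ σ : Equiv.Perm (Fin n), g.val = permMat σ) ∨
      (∃ γ : Fin n → ℍˣ, (∀ i, γ i ∈ Γ) ∧ (List.ofFn γ).prod ∈ Δ ∧
        g.val = Matrix.diagonal fun i => (γ i : ℍ))}

/-- `diagAt m γ` is the diagonal matrix with `γ` in position `m` and `1` elsewhere. -/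
def diagAt {n : ℕ} (m : Fin n) (γ : ℍ) : Matrix (Fin n) (Fin n) ℍ :=
  Matrix.diagonal fun i => if i = m then γ else 1

/-- The set `{1} ∪ {γ_n (m n) γ_n⁻¹ : m ≠ n, γ ∈ Γ} ∪ {γ_n : γ ∈ Γ, γ ≠ 1}` of coset
representatives, where the last index of `Fin (n+1)` plays the role of `n`. -/
def cosetReps (n : ℕ) (Γ : Subgroup ℍˣ) : Set (Matrix (Fin (n+1)) (Fin (n+1)) ℍ) :=
  {1} ∪
  {x | ∃ m : Fin (n+1), m ≠ Fin.last n ∧ ∃ γ ∈ Γ,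
    x = diagAt (Fin.last n) (γ : ℍ) * permMat (Equiv.swap m (Fin.last n)) *
      diagAt (Fin.last n) ((γ⁻¹ : ℍˣ) : ℍ)} ∪
  {x | ∃ γ ∈ Γ, γ ≠ 1 ∧ x = diagAt (Fin.last n) (γ : ℍ)}

open Matrix

section Monomial

variable {k : ℕ}

lemma mem_fixSpace {w : Matrix (Fin k) (Fin k) ℍ} {u : Fin k → ℍ} :
    u ∈ fixSpace w ↔ w *ᵥ u = u := Iff.rfl

lemma permMat_mulVec (σ : Equiv.Perm (Fin k)) (u : Fin k → ℍ) :
    permMat σ *ᵥ u = fun i => u (σ i) := by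
  funext i
  simp [permMat, mulVec, dotProduct, ite_mul]

lemma permMat_mul (σ τ : Equiv.Perm (Fin k)) : permMat σ * permMat τ = permMat (τ * σ) := by
  refine ext_of_mulVec_single fun i => ?_
  rw [← mulVec_mulVec, permMat_mulVec, permMat_mulVec, permMat_mulVec]
  rfl

lemma permMat_one : permMat (1 : Equiv.Perm (Fin k)) = 1 :=
  ext_of_mulVec_single fun i => by rw [permMat_mulVec, one_mulVec]; rfl

lemma diagAt_mulVec (m : Fin k) (γ : ℍ) (u : Fin k → ℍ) :
    diagAt m γ *ᵥ u = Function.update u m (γ * u m) := by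
  funext i
  by_cases hi : i = m
  · subst hi; simp [diagAt, mulVec_diagonal]
  · simp [diagAt, mulVec_diagonal, hi]

def monomialSubgroup (k : ℕ) (Γ : Subgroup ℍˣ) : Subgroup (Matrix (Fin k) (Fin k) ℍ)ˣ where
  carrier := {g | ∃ σ : Equiv.Perm (Fin k), ∃ d : Fin k → ℍˣ, (∀ i, d i ∈ Γ) ∧
    ∀ u, g.val *ᵥ u = fun i => d i * u (σ i)}
  one_mem' := ⟨1, 1, fun _ => one_mem Γ, fun u => by simp⟩
  mul_mem' := by
    rintro g h ⟨σ, d, hd, hg⟩ ⟨τ, e, he, hh⟩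
    refine ⟨σ.trans τ, fun i => d i * e (σ i), fun i => mul_mem (hd i) (he _), fun u => ?_⟩
    funext i
    simp [← mulVec_mulVec, hg, hh, mul_assoc]
  inv_mem' := by
    rintro g ⟨σ, d, hd, hg⟩
    refine ⟨σ.symm, fun i => (d (σ.symm i))⁻¹, fun i => inv_mem (hd _), fun u => ?_⟩
    set z : Fin k → ℍ := fun i => ((d (σ.symm i))⁻¹ : ℍˣ) * u (σ.symm i)
    have hgz : g.val *ᵥ z = u := by
      funext i
      simp [z, hg]
    calc g⁻¹.val *ᵥ u = g⁻¹.val *ᵥ (g.val *ᵥ z) := by rw [hgz]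
      _ = z := by rw [mulVec_mulVec, Units.inv_mul, one_mulVec]

lemma Wgrp_le_monomialSubgroup (Γ Δ : Subgroup ℍˣ) : Wgrp k Γ Δ ≤ monomialSubgroup k Γ := by
  refine Subgroup.closure_le _ |>.mpr ?_
  rintro g (⟨σ, hσ⟩ | ⟨γ, hγ, -, hg⟩)
  · exact ⟨σ, 1, fun _ => one_mem Γ, fun u => by simp [hσ, permMat_mulVec]⟩
  · exact ⟨1, γ, hγ, fun u => by rw [hg]; funext i; exact mulVec_diagonal _ _ _⟩

variable {Γ : Subgroup ℍˣ} {g : (Matrix (Fin k) (Fin k) ℍ)ˣ}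

lemma exists_mulVec_single_of_mem_monomialSubgroup (hg : g ∈ monomialSubgroup k Γ) (i : Fin k) :
    ∃ j, ∃ c ∈ Γ, g.val *ᵥ Pi.single i 1 = Pi.single j (c : ℍ) := by
  obtain ⟨σ, d, hd, hgσ⟩ := hg
  refine ⟨σ.symm i, d (σ.symm i), hd _, ?_⟩
  funext j
  by_cases hj : j = σ.symm i
  · subst hj; simp [hgσ]
  · have : σ j ≠ i := fun h => hj (σ.eq_symm_apply.mpr h)
    simp [hgσ, hj, this]

lemma mulVec_apply_eq_of_mulVec_single (hg : g ∈ monomialSubgroup k Γ) {i : Fin k}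
    (hfix : g.val *ᵥ Pi.single i 1 = Pi.single i 1) (u : Fin k → ℍ) :
    (g.val *ᵥ u) i = u i := by
  obtain ⟨σ, d, -, hgσ⟩ := hg
  have hi : (d i : ℍ) * (Pi.single i 1 : Fin k → ℍ) (σ i) = 1 := by
    simpa [hgσ] using congrFun hfix i
  have hσi : σ i = i := by
    by_contra hne
    simp [hne] at hi
  rw [hσi, Pi.single_eq_same, mul_one] at hi
  simp [hgσ, hσi, hi]

def permUnit (σ : Equiv.Perm (Fin k)) : (Matrix (Fin k) (Fin k) ℍ)ˣ where
  val := permMat σ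
  inv := permMat σ⁻¹
  val_inv := by rw [permMat_mul, inv_mul_cancel, permMat_one]
  inv_val := by rw [permMat_mul, mul_inv_cancel, permMat_one]

def diagUnit (d : Fin k → ℍˣ) : (Matrix (Fin k) (Fin k) ℍ)ˣ where
  val := diagonal fun i => (d i : ℍ)
  inv := diagonal fun i => ((d i)⁻¹ : ℍˣ)
  val_inv := by simp [diagonal_mul_diagonal]
  inv_val := by simp [diagonal_mul_diagonal]

lemma permUnit_mem_Wgrp (Γ Δ : Subgroup ℍˣ) (σ : Equiv.Perm (Fin k)) :
    permUnit σ ∈ Wgrp k Γ Δ :=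
  Subgroup.subset_closure (Or.inl ⟨σ, rfl⟩)

lemma diagUnit_mem_Wgrp {Γ : Subgroup ℍˣ} {d : Fin k → ℍˣ} (hd : ∀ i, d i ∈ Γ) :
    diagUnit d ∈ Wgrp k Γ Γ :=
  Subgroup.subset_closure <| Or.inr ⟨d, hd, list_prod_mem fun _ hx => by
    obtain ⟨i, rfl⟩ := List.mem_ofFn.mp hx
    exact hd i, rfl⟩

lemma exists_mem_Wgrp_val_eq_diagAt {Γ : Subgroup ℍˣ} (m : Fin k) {c : ℍˣ} (hc : c ∈ Γ) :
    ∃ x ∈ Wgrp k Γ Γ, x.val = diagAt m (c : ℍ) := by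
  refine ⟨diagUnit (Pi.mulSingle m c), diagUnit_mem_Wgrp fun i => ?_, ?_⟩
  · by_cases hi : i = m
    · simpa [hi] using hc
    · simp [hi, one_mem]
  · simp only [diagAt, diagUnit, Pi.mulSingle_apply, apply_ite Units.val, Units.val_one]

end Monomial

section CosetReps

variable {n : ℕ}

/-- The representative `x` with `x e_n = c e_j`; for `j ≠ n` it is `γ_n (j n) γ_n⁻¹` with
`γ = c⁻¹`. -/
def cosetRep (j : Fin (n+1)) (c : ℍ) : Matrix (Fin (n+1)) (Fin (n+1)) ℍ :=
  if j = Fin.last n then diagAt (Fin.last n) c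
  else diagAt (Fin.last n) c⁻¹ * permMat (Equiv.swap j (Fin.last n)) * diagAt (Fin.last n) c

lemma cosetRep_last_mulVec (c : ℍ) (u : Fin (n+1) → ℍ) :
    cosetRep (Fin.last n) c *ᵥ u = Function.update u (Fin.last n) (c * u (Fin.last n)) := by
  rw [cosetRep, if_pos rfl, diagAt_mulVec]

lemma cosetRep_mulVec_of_ne {j : Fin (n+1)} (hj : j ≠ Fin.last n) (c : ℍ) (u : Fin (n+1) → ℍ) :
    cosetRep j c *ᵥ u = Function.update (Function.update u j (c * u (Fin.last n)))
      (Fin.last n) (c⁻¹ * u j) := by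
  rw [cosetRep, if_neg hj, ← mulVec_mulVec, ← mulVec_mulVec, diagAt_mulVec, permMat_mulVec,
    diagAt_mulVec]
  funext i
  by_cases hil : i = Fin.last n
  · subst hil; simp [hj]
  · by_cases hij : i = j
    · subst hij; simp [hil]
    · simp [hil, hij, Equiv.swap_apply_of_ne_of_ne hij hil]

lemma cosetRep_mulVec_single (j : Fin (n+1)) (c : ℍ) :
    cosetRep j c *ᵥ Pi.single (Fin.last n) 1 = Pi.single j c := by
  by_cases hj : j = Fin.last n
  · subst hj
    rw [cosetRep_last_mulVec, Pi.single_eq_same, mul_one]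
    exact Function.update_idem ..
  · rw [cosetRep_mulVec_of_ne hj]
    funext i
    simp only [Function.update_apply, Pi.single_apply]
    split_ifs <;> simp_all

lemma mem_cosetReps_iff {Γ : Subgroup ℍˣ} {x : Matrix (Fin (n+1)) (Fin (n+1)) ℍ} :
    x ∈ cosetReps n Γ ↔ ∃ j, ∃ c ∈ Γ, x = cosetRep j (c : ℍ) := by
  have diagAt_one : diagAt (Fin.last n) (1 : ℍ) = 1 := by simp [diagAt]
  simp only [cosetReps, Set.mem_union, Set.mem_singleton_iff, Set.mem_ofPred_eq]
  constructor
  · rintro ((rfl | ⟨m, hm, γ, hγ, rfl⟩) | ⟨γ, hγ, -, rfl⟩)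
    · exact ⟨Fin.last n, 1, one_mem Γ, by simp [cosetRep, diagAt_one]⟩
    · exact ⟨m, γ⁻¹, inv_mem hγ, by simp [cosetRep, hm]⟩
    · exact ⟨Fin.last n, γ, hγ, by simp [cosetRep]⟩
  · rintro ⟨j, c, hc, rfl⟩
    by_cases hj : j = Fin.last n
    · subst hj
      by_cases hc1 : c = 1
      · simp [cosetRep, hc1, diagAt_one]
      · exact Or.inr ⟨c, hc, hc1, by simp [cosetRep]⟩
    · exact Or.inl (Or.inr ⟨j, hj, c⁻¹, inv_mem hc, by simp [cosetRep, hj]⟩)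

lemma cosetRep_mulVec_eq_self {j : Fin (n+1)} {c : ℍ} (hc : c ≠ 0) {y : Fin (n+1) → ℍ}
    (hy : (cosetRep j c *ᵥ y) (Fin.last n) = y (Fin.last n)) : cosetRep j c *ᵥ y = y := by
  by_cases hj : j = Fin.last n
  · subst hj
    rw [cosetRep_last_mulVec] at hy ⊢
    simp only [Function.update_self] at hy
    rw [hy, Function.update_eq_self]
  · rw [cosetRep_mulVec_of_ne hj] at hy ⊢
    simp only [Function.update_self] at hy
    rw [← hy, mul_inv_cancel_left₀ hc, Function.update_eq_self, hy, Function.update_eq_self]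

lemma exists_update_last_mem_fixSpace_cosetRep (j : Fin (n+1)) {c : ℍ} (hc : c ≠ 0)
    (y : Fin (n+1) → ℍ) : ∃ a, Function.update y (Fin.last n) a ∈ fixSpace (cosetRep j c) := by
  by_cases hj : j = Fin.last n
  · subst hj
    exact ⟨0, by simp [mem_fixSpace, cosetRep_last_mulVec]⟩
  · refine ⟨c⁻¹ * y j, cosetRep_mulVec_eq_self hc ?_⟩
    simp [cosetRep_mulVec_of_ne hj, hj, mul_inv_cancel_left₀ hc]

lemma exists_mem_Wgrp_val_eq_cosetRep {Γ : Subgroup ℍˣ} (j : Fin (n+1)) {c : ℍˣ}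
    (hc : c ∈ Γ) : ∃ x ∈ Wgrp (n+1) Γ Γ, x.val = cosetRep j (c : ℍ) := by
  obtain ⟨y, hyW, hy⟩ := exists_mem_Wgrp_val_eq_diagAt (Fin.last n) hc
  by_cases hj : j = Fin.last n
  · exact ⟨y, hyW, by rw [hy, cosetRep, if_pos hj]⟩
  · obtain ⟨z, hzW, hz⟩ := exists_mem_Wgrp_val_eq_diagAt (Fin.last n) (inv_mem hc)
    refine ⟨z * permUnit (Equiv.swap j (Fin.last n)) * y,
      mul_mem (mul_mem hzW (permUnit_mem_Wgrp _ _ _)) hyW, ?_⟩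
    rw [cosetRep, if_neg hj, Units.val_mul, Units.val_mul, hy, hz, Units.val_inv_eq_inv_val]
    rfl

end CosetReps

lemma finrank_sub_finrank_inf_of_sup_eq_top {K V : Type*} [DivisionRing K] [AddCommGroup V]
    [Module K V] [FiniteDimensional K V] {A B : Submodule K V} (h : A ⊔ B = ⊤) :
    Module.finrank K V - Module.finrank K ↥(A ⊓ B) =
      (Module.finrank K V - Module.finrank K A) + (Module.finrank K V - Module.finrank K B) := by
  have hsum := Submodule.finrank_sup_add_finrank_inf_eq A B
  rw [h, finrank_top] at hsum
  have hA := A.finrank_le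
  have hB := B.finrank_le
  omega

instance : Module.Finite ℍᵐᵒᵖ ℍ := Module.Finite.equiv (MulOpposite.opLinearEquiv ℍᵐᵒᵖ).symm

section FixSpace

variable {k : ℕ} {x v : Matrix (Fin k) (Fin k) ℍ} {i : Fin k}

lemma finrank_quaternion_pi : Module.finrank ℍᵐᵒᵖ (Fin k → ℍ) = k := by
  rw [(LinearEquiv.piCongrRight fun _ => MulOpposite.opLinearEquiv ℍᵐᵒᵖ).finrank_eq]
  simp

lemma fixSpace_mul_eq_inf (hx : ∀ y, (x *ᵥ y) i = y i → x *ᵥ y = y)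
    (hv : ∀ u, (v *ᵥ u) i = u i) : fixSpace (x * v) = fixSpace x ⊓ fixSpace v := by
  ext u
  simp only [Submodule.mem_inf, mem_fixSpace, ← mulVec_mulVec]
  constructor
  · intro hu
    have hxv : x *ᵥ (v *ᵥ u) = v *ᵥ u := hx _ (by rw [hu, hv])
    have hvu : v *ᵥ u = u := hxv.symm.trans hu
    exact ⟨by rwa [hvu] at hxv, hvu⟩
  · rintro ⟨hxu, hvu⟩
    rw [hvu, hxu]

lemma fixSpace_sup_eq_top (hx : ∀ y, ∃ a, Function.update y i a ∈ fixSpace x)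
    (hv : v *ᵥ Pi.single i 1 = Pi.single i 1) : fixSpace x ⊔ fixSpace v = ⊤ := by
  refine Submodule.eq_top_iff'.mpr fun y => ?_
  obtain ⟨a, ha⟩ := hx y
  have hsingle : Pi.single i (y i - a) ∈ fixSpace v := by
    have := (fixSpace v).smul_mem (MulOpposite.op (y i - a)) (mem_fixSpace.mpr hv)
    convert this using 1
    funext j
    by_cases hj : j = i <;> simp [hj]
  convert Submodule.add_mem_sup ha hsingle using 1
  funext j
  by_cases hj : j = i <;> simp [hj]

lemma codimFix_mul (hinf : fixSpace (x * v) = fixSpace x ⊓ fixSpace v)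
    (hsup : fixSpace x ⊔ fixSpace v = ⊤) : codimFix (x * v) = codimFix x + codimFix v := by
  rw [codimFix, codimFix, codimFix, hinf]
  simpa only [finrank_quaternion_pi] using
    finrank_sub_finrank_inf_of_sup_eq_top hsup

end FixSpace

section Decomposition

variable {n : ℕ} {Γ : Subgroup ℍˣ}

theorem existsUnique_cosetReps_mul {w : (Matrix (Fin (n+1)) (Fin (n+1)) ℍ)ˣ}
    (hw : w ∈ Wgrp (n+1) Γ Γ) :
    ∃! p : Matrix (Fin (n+1)) (Fin (n+1)) ℍ × (Matrix (Fin (n+1)) (Fin (n+1)) ℍ)ˣ,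
      p.1 ∈ cosetReps n Γ ∧ p.2 ∈ Wgrp (n+1) Γ Γ ∧
      p.2.val *ᵥ Pi.single (Fin.last n) 1 = Pi.single (Fin.last n) 1 ∧
      w.val = p.1 * p.2.val := by
  obtain ⟨j, c, hc, hwe⟩ :=
    exists_mulVec_single_of_mem_monomialSubgroup (Wgrp_le_monomialSubgroup Γ Γ hw) (Fin.last n)
  obtain ⟨x, hxW, hx⟩ := exists_mem_Wgrp_val_eq_cosetRep j hc
  have hxe : x.val *ᵥ Pi.single (Fin.last n) 1 = w.val *ᵥ Pi.single (Fin.last n) 1 := by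
    rw [hx, cosetRep_mulVec_single, hwe]
  refine ⟨(x.val, x⁻¹ * w),
    ⟨mem_cosetReps_iff.mpr ⟨j, c, hc, hx⟩, mul_mem (inv_mem hxW) hw, ?_, by simp⟩, ?_⟩
  · rw [Units.val_mul, ← mulVec_mulVec, ← hxe, mulVec_mulVec, Units.inv_mul, one_mulVec]
  · rintro ⟨y, v⟩ ⟨hy, -, hve, hwyv⟩
    dsimp only at hy hve hwyv
    obtain ⟨j', c', -, rfl⟩ := mem_cosetReps_iff.mp hy
    have hcol : (Pi.single j' (c' : ℍ) : Fin (n+1) → ℍ) = Pi.single j (c : ℍ) := by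
      rw [← cosetRep_mulVec_single, ← hve, mulVec_mulVec, ← hwyv, hwe]
    obtain rfl : j' = j := by
      by_contra hne
      simpa [hne] using congrFun hcol j'
    have hyx : cosetRep j' (c' : ℍ) = x.val := by rw [hx, Pi.single_injective j' hcol]
    refine Prod.ext hyx (Units.ext ?_)
    rw [Units.val_mul, hwyv, hyx, ← mul_assoc, Units.inv_mul, one_mul]

theorem fixSpace_mul_and_codimFix_mul_of_mem_cosetReps {x : Matrix (Fin (n+1)) (Fin (n+1)) ℍ}
    {v : (Matrix (Fin (n+1)) (Fin (n+1)) ℍ)ˣ} (hx : x ∈ cosetReps n Γ) (hv : v ∈ Wgrp (n+1) Γ Γ)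
    (hve : v.val *ᵥ Pi.single (Fin.last n) 1 = Pi.single (Fin.last n) 1) :
    fixSpace (x * v.val) = fixSpace x ⊓ fixSpace v.val ∧
      codimFix (x * v.val) = codimFix x + codimFix v.val := by
  obtain ⟨j, c, -, rfl⟩ := mem_cosetReps_iff.mp hx
  have hinf := fixSpace_mul_eq_inf (fun _ => cosetRep_mulVec_eq_self (j := j) c.ne_zero)
    (mulVec_apply_eq_of_mulVec_single (Wgrp_le_monomialSubgroup Γ Γ hv) hve)
  have hsup := fixSpace_sup_eq_top (exists_update_last_mem_fixSpace_cosetRep j c.ne_zero) hve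
  exact ⟨hinf, codimFix_mul hinf hsup⟩

end Decomposition

theorem Wn_product_decomposition_general (n : ℕ) (Γ : Subgroup ℍˣ)
    (w : (Matrix (Fin (n+1)) (Fin (n+1)) ℍ)ˣ) (hw : w ∈ Wgrp (n+1) Γ Γ) :
    (∃! p : Matrix (Fin (n+1)) (Fin (n+1)) ℍ × (Matrix (Fin (n+1)) (Fin (n+1)) ℍ)ˣ,
      p.1 ∈ cosetReps n Γ ∧ p.2 ∈ Wgrp (n+1) Γ Γ ∧
      p.2.val.mulVec (Pi.single (Fin.last n) 1) = Pi.single (Fin.last n) 1 ∧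
      w.val = p.1 * p.2.val) ∧
    (∀ x : Matrix (Fin (n+1)) (Fin (n+1)) ℍ, ∀ v : (Matrix (Fin (n+1)) (Fin (n+1)) ℍ)ˣ,
      x ∈ cosetReps n Γ → v ∈ Wgrp (n+1) Γ Γ →
      v.val.mulVec (Pi.single (Fin.last n) 1) = Pi.single (Fin.last n) 1 →
      w.val = x * v.val →
      fixSpace w.val = fixSpace x ⊓ fixSpace v.val ∧
      codimFix w.val = codimFix x + codimFix v.val) :=
  ⟨existsUnique_cosetReps_mul hw, fun _ _ hx hv hve hwxv =>
    hwxv ▸ fixSpace_mul_and_codimFix_mul_of_mem_cosetReps hx hv hve⟩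

/-- Each `w ∈ W_{n+1}(Γ)` factors uniquely as `w = x·v` with `v` in the copy of `W_n(Γ)`
fixing `e_{n+1}` (the stabilizer of the last basis vector) and `x` among the listed coset
representatives; moreover `fix(w) = fix(x) ∩ fix(v)` and the codimensions add. -/
theorem Wn_product_decomposition (n : ℕ) (hn : 1 ≤ n)
    (Γ : Subgroup ℍˣ) (hΓ : (Γ : Set ℍˣ).Finite)
    (w : (Matrix (Fin (n+1)) (Fin (n+1)) ℍ)ˣ) (hw : w ∈ Wgrp (n+1) Γ Γ) :
    (∃! p : Matrix (Fin (n+1)) (Fin (n+1)) ℍ × (Matrix (Fin (n+1)) (Fin (n+1)) ℍ)ˣ,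
      p.1 ∈ cosetReps n Γ ∧ p.2 ∈ Wgrp (n+1) Γ Γ ∧
      p.2.val.mulVec (Pi.single (Fin.last n) 1) = Pi.single (Fin.last n) 1 ∧
      w.val = p.1 * p.2.val) ∧
    (∀ x : Matrix (Fin (n+1)) (Fin (n+1)) ℍ, ∀ v : (Matrix (Fin (n+1)) (Fin (n+1)) ℍ)ˣ,
      x ∈ cosetReps n Γ → v ∈ Wgrp (n+1) Γ Γ →
      v.val.mulVec (Pi.single (Fin.last n) 1) = Pi.single (Fin.last n) 1 →
      w.val = x * v.val →
      fixSpace w.val = fixSpace x ⊓ fixSpace v.val ∧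
      codimFix w.val = codimFix x + codimFix v.val) :=
  Wn_product_decomposition_general n Γ w hw
end
end

section
/- Let Γ ≤ ℍ^× be a finite subgroup, σ ∈ S_n a permutation with permutation matrix P_σ, and γ^{(1)},…,γ^{(n)} ∈ Γ, and let w = diag(γ^{(1)},…,γ^{(n)})·P_σ ∈ GL_n(ℍ). Then the ℍ-dimension of the fixed subspace fix(w) = ker(w−1) in ℍ^n equals the number of cycles c = (p₁ p₂ ⋯ p_ℓ) of σ whose cycle product γ^{(p₁)}γ^{(p₂)}⋯γ^{(p_ℓ)} equals 1 (this condition is independent of the chosen starting point of the cycle). -/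
noncomputable section

local notation "ℍ" => Quaternion ℝ

/-- The cycle product of the cycle of `σ` through `p`, for the labels `γ`:
`γ_{p} · γ_{σ p} · γ_{σ² p} ⋯ γ_{σ^{ℓ−1} p}` where `ℓ` is the length of the cycle. -/
def cycleProd {n : ℕ} (γ : Fin n → ℍ) (σ : Equiv.Perm (Fin n)) (p : Fin n) : ℍ :=
  ((List.range (Function.minimalPeriod (⇑σ) p)).map fun t => γ ((σ ^ t) p)).prod

namespace FixAuxQ

variable {n : ℕ} (σ : Equiv.Perm (Fin n)) (γ : Fin n → ℍˣ)

/-- prefix product of labels along the orbit, as a unit -/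
def prefU (i : Fin n) (t : ℕ) : ℍˣ :=
  ((List.range t).map fun s => γ ((σ ^ s) i)).prod

lemma prefU_zero (i : Fin n) : prefU σ γ i 0 = 1 := rfl

lemma prefU_succ (i : Fin n) (t : ℕ) :
    prefU σ γ i (t + 1) = prefU σ γ i t * γ ((σ ^ t) i) := by
  simp [prefU, List.range_succ]

lemma coe_prefU (i : Fin n) (t : ℕ) :
    (prefU σ γ i t : ℍ) = ((List.range t).map fun s => ((γ ((σ ^ s) i) : ℍ))).prod := by
  rw [prefU]
  change (Units.coeHom ℍ) _ = _
  rw [map_list_prod, List.map_map]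
  rfl

lemma pow_add_apply (a b : ℕ) (i : Fin n) : (σ ^ (a + b)) i = (σ ^ b) ((σ ^ a) i) := by
  rw [add_comm, pow_add, Equiv.Perm.mul_apply]

lemma prefU_add (i : Fin n) (a b : ℕ) :
    prefU σ γ i (a + b) = prefU σ γ i a * prefU σ γ ((σ ^ a) i) b := by
  induction b with
  | zero => simp [prefU_zero]
  | succ b ih =>
      rw [← add_assoc, prefU_succ, ih, prefU_succ, mul_assoc, pow_add_apply]

lemma prefU_mod {p : Fin n} {m : ℕ} (hm : 0 < m) (hp : (σ ^ m) p = p)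
    (h1 : prefU σ γ p m = 1) (t : ℕ) :
    prefU σ γ p (t % m) = prefU σ γ p t := by
  induction t using Nat.strong_induction_on with
  | _ t ih =>
    rcases lt_or_ge t m with h | h
    · rw [Nat.mod_eq_of_lt h]
    · obtain ⟨s, rfl⟩ := Nat.exists_eq_add_of_le h
      rw [Nat.add_mod_left, ih s (by omega), prefU_add, h1, one_mul, hp]

lemma minimalPeriod_pos (p : Fin n) : 0 < Function.minimalPeriod (⇑σ) p := by
  apply Function.minimalPeriod_pos_of_mem_periodicPts
  exact ⟨orderOf σ, orderOf_pos σ, by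
    show Function.IsPeriodicPt _ _ _
    rw [Function.IsPeriodicPt, Function.IsFixedPt, ← Equiv.Perm.coe_pow,
      pow_orderOf_eq_one]; rfl⟩

lemma pow_minimalPeriod_apply (p : Fin n) :
    (σ ^ Function.minimalPeriod (⇑σ) p) p = p := by
  rw [Equiv.Perm.coe_pow]; exact Function.iterate_minimalPeriod

lemma mod_eq_of_pow_apply_eq {p : Fin n} {a b : ℕ} (h : (σ ^ a) p = (σ ^ b) p) :
    a % Function.minimalPeriod (⇑σ) p = b % Function.minimalPeriod (⇑σ) p := by
  apply Function.iterate_injOn_Iio_minimalPeriod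
    (Nat.mod_lt _ (minimalPeriod_pos σ p)) (Nat.mod_lt _ (minimalPeriod_pos σ p))
  simp only [Function.iterate_mod_minimalPeriod_eq]
  rw [← Equiv.Perm.coe_pow, ← Equiv.Perm.coe_pow]
  exact h

/-- The finite orbit of `i` under `σ`. -/
def orbitF (i : Fin n) : Finset (Fin n) :=
  (Finset.range (orderOf σ)).image fun t => (σ ^ t) i

lemma mem_orbitF_iff {i j : Fin n} : j ∈ orbitF σ i ↔ ∃ t : ℕ, (σ ^ t) i = j := by
  constructor
  · rintro h
    obtain ⟨t, -, rfl⟩ := Finset.mem_image.1 h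
    exact ⟨t, rfl⟩
  · rintro ⟨t, rfl⟩
    refine Finset.mem_image.2 ⟨t % orderOf σ, Finset.mem_range.2 (Nat.mod_lt _ (orderOf_pos σ)), ?_⟩
    rw [pow_mod_orderOf]

lemma self_mem_orbitF (i : Fin n) : i ∈ orbitF σ i :=
  (mem_orbitF_iff σ).2 ⟨0, rfl⟩

lemma orbitF_apply (i : Fin n) : orbitF σ (σ i) = orbitF σ i := by
  ext j
  rw [mem_orbitF_iff, mem_orbitF_iff]
  constructor
  · rintro ⟨t, rfl⟩
    exact ⟨1 + t, by rw [pow_add_apply, pow_one]⟩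
  · rintro ⟨t, rfl⟩
    refine ⟨(orderOf σ - 1) + t, ?_⟩
    have h1 : (σ ^ (orderOf σ - 1)) (σ i) = i := by
      have h2 : (σ ^ (orderOf σ - 1)) (σ i) = (σ ^ (orderOf σ - 1) * σ) i := rfl
      rw [h2, ← pow_succ, Nat.sub_add_cancel (orderOf_pos σ), pow_orderOf_eq_one]
      rfl
    rw [pow_add_apply, h1]

lemma orbitF_pow_apply (i : Fin n) (t : ℕ) : orbitF σ ((σ ^ t) i) = orbitF σ i := by
  induction t with
  | zero => rfl
  | succ t ih =>
      have : (σ ^ (t + 1)) i = σ ((σ ^ t) i) := by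
        rw [pow_add_apply σ t 1, pow_one]
      rw [this, orbitF_apply, ih]

/-- least element of the orbit of `i` -/
def base (i : Fin n) : Fin n :=
  (orbitF σ i).min' ⟨i, self_mem_orbitF σ i⟩

lemma base_mem (i : Fin n) : base σ i ∈ orbitF σ i := Finset.min'_mem _ _

lemma base_le {i j : Fin n} (hj : j ∈ orbitF σ i) : base σ i ≤ j := Finset.min'_le _ _ hj

lemma base_pow_apply (i : Fin n) (t : ℕ) : base σ ((σ ^ t) i) = base σ i := by
  simp only [base]
  congr 1
  exact orbitF_pow_apply σ i t

lemma base_apply (i : Fin n) : base σ (σ i) = base σ i := by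
  have : σ i = (σ ^ 1) i := by rw [pow_one]
  rw [this, base_pow_apply]

lemma base_min (i : Fin n) (s : ℕ) : base σ i ≤ (σ ^ s) (base σ i) := by
  apply base_le
  obtain ⟨t, ht⟩ := (mem_orbitF_iff σ).1 (base_mem σ i)
  rw [← ht, ← pow_add_apply]
  exact (mem_orbitF_iff σ).2 ⟨t + s, rfl⟩

lemma base_eq_self {p : Fin n} (h : ∀ s : ℕ, p ≤ (σ ^ s) p) : base σ p = p := by
  refine le_antisymm (base_le σ (self_mem_orbitF σ p)) ?_
  obtain ⟨t, ht⟩ := (mem_orbitF_iff σ).1 (base_mem σ p)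
  rw [← ht]; exact h t

lemma exists_pow_base (i : Fin n) : ∃ t : ℕ, (σ ^ t) (base σ i) = i := by
  apply (mem_orbitF_iff σ).1
  obtain ⟨t, ht⟩ := (mem_orbitF_iff σ).1 (base_mem σ i)
  rw [← ht, orbitF_pow_apply]
  exact self_mem_orbitF σ i

/-- least exponent sending the base back to `i` -/
def kIdx (i : Fin n) : ℕ := Nat.find (exists_pow_base σ i)

lemma kIdx_spec (i : Fin n) : (σ ^ kIdx σ i) (base σ i) = i := Nat.find_spec (exists_pow_base σ i)




lemma permMat_mulVec (x : Fin n → ℍ) (i : Fin n) :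
    (permMat σ).mulVec x i = x (σ i) := by
  simp [permMat, Matrix.mulVec, dotProduct, ite_mul]

lemma mem_fixSpace_iff (x : Fin n → ℍ) :
    x ∈ fixSpace ((Matrix.diagonal fun i => (γ i : ℍ)) * permMat σ) ↔
      ∀ i, (γ i : ℍ) * x (σ i) = x i := by
  have h : ∀ i, ((Matrix.diagonal fun i => (γ i : ℍ)) * permMat σ).mulVec x i
      = (γ i : ℍ) * x (σ i) := by
    intro i
    rw [← Matrix.mulVec_mulVec, Matrix.mulVec_diagonal, permMat_mulVec]
  constructor
  · intro hx i
    rw [← h i]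
    exact congrFun hx i
  · intro hx
    funext i
    rw [show ((Matrix.diagonal fun i => (γ i : ℍ)) * permMat σ).mulVec x i = _ from h i, hx i]

lemma fix_pow {x : Fin n → ℍ} (hx : ∀ i, (γ i : ℍ) * x (σ i) = x i) (i : Fin n) (t : ℕ) :
    x i = (prefU σ γ i t : ℍ) * x ((σ ^ t) i) := by
  induction t with
  | zero => simp [prefU_zero]
  | succ t ih =>
      have hstep : σ ((σ ^ t) i) = (σ ^ (t + 1)) i := by
        rw [pow_add_apply σ t 1, pow_one]
      rw [ih, ← hx ((σ ^ t) i), prefU_succ, Units.val_mul, mul_assoc, hstep]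

lemma coe_prefU_minimalPeriod (p : Fin n) :
    cycleProd (fun i => (γ i : ℍ)) σ p
      = (prefU σ γ p (Function.minimalPeriod (⇑σ) p) : ℍ) := by
  rw [coe_prefU, cycleProd]

end FixAuxQ

open FixAuxQ

/-- For `w = diag(γ)·P_σ`, the ℍ-dimension of `fix(w)` equals the number of cycles of `σ`
whose cycle product equals `1` (each cycle counted via its least element). -/
theorem finrank_fixSpace_eq_card_cycles_with_trivial_product (n : ℕ)
    (Γ : Subgroup ℍˣ) (hΓ : (Γ : Set ℍˣ).Finite)
    (σ : Equiv.Perm (Fin n)) (γ : Fin n → ℍˣ) (hγ : ∀ i, γ i ∈ Γ) :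
    Module.finrank ℍᵐᵒᵖ
        (fixSpace ((Matrix.diagonal fun i => (γ i : ℍ)) * permMat σ)) =
      Nat.card {p : Fin n // (∀ t : ℕ, p ≤ (σ ^ t) p) ∧
        cycleProd (fun i => (γ i : ℍ)) σ p = 1} := by
  classical
  set S := {p : Fin n // (∀ t : ℕ, p ≤ (σ ^ t) p) ∧
    cycleProd (fun i => (γ i : ℍ)) σ p = 1} with hS
  set W := fixSpace ((Matrix.diagonal fun i => (γ i : ℍ)) * permMat σ) with hW
  -- the evaluation map
  let Φ : W →ₗ[ℍᵐᵒᵖ] (S → ℍ) :=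
    { toFun := fun x p => x.1 p.1
      map_add' := fun x y => rfl
      map_smul' := fun c x => rfl }
  have hinj : Function.Injective Φ := by
    intro x y hxy
    -- reduce to kernel
    have hz : ∀ p : S, x.1 p.1 - y.1 p.1 = 0 := fun p => sub_eq_zero.2 (congrFun hxy p)
    have hmem := (W.sub_mem x.2 y.2)
    set z : Fin n → ℍ := x.1 - y.1 with hzdef
    have hzfix : ∀ i, (γ i : ℍ) * z (σ i) = z i := (mem_fixSpace_iff σ γ z).1 hmem
    have hz0 : ∀ i, z i = 0 := by
      intro i
      set p := base σ i with hp
      have hkey : z p = (prefU σ γ p (kIdx σ i) : ℍ) * z i := by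
        have := fix_pow σ γ hzfix p (kIdx σ i)
        rwa [kIdx_spec] at this
      have hzi : z i = ((prefU σ γ p (kIdx σ i))⁻¹ : ℍˣ) * z p := by
        rw [hkey, ← mul_assoc, ← Units.val_mul, inv_mul_cancel, Units.val_one, one_mul]
      suffices hzp : z p = 0 by rw [hzi, hzp, mul_zero]
      by_cases hcp : cycleProd (fun i => (γ i : ℍ)) σ p = 1
      · have : x.1 p - y.1 p = 0 := hz ⟨p, base_min σ i, hcp⟩
        simpa [hzdef] using this
      · have hcyc : z p = cycleProd (fun i => (γ i : ℍ)) σ p * z p := by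
          have := fix_pow σ γ hzfix p (Function.minimalPeriod (⇑σ) p)
          rwa [pow_minimalPeriod_apply, ← coe_prefU_minimalPeriod] at this
        have h0 : (cycleProd (fun i => (γ i : ℍ)) σ p - 1) * z p = 0 := by
          rw [sub_mul, one_mul, ← hcyc, sub_self]
        rcases mul_eq_zero.1 h0 with h | h
        · exact absurd (sub_eq_zero.1 h) hcp
        · exact h
    have : z = 0 := funext hz0
    have := sub_eq_zero.1 (hzdef ▸ this)
    exact Subtype.ext this
  have hsurj : Function.Surjective Φ := by
    intro v
    set V : Fin n → ℍ := fun q =>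
      if h : (∀ t : ℕ, q ≤ (σ ^ t) q) ∧ cycleProd (fun i => (γ i : ℍ)) σ q = 1
      then v ⟨q, h⟩ else 0 with hV
    set x : Fin n → ℍ := fun i =>
      (((prefU σ γ (base σ i) (kIdx σ i))⁻¹ : ℍˣ) : ℍ) * V (base σ i) with hx
    have hxfix : ∀ i, (γ i : ℍ) * x (σ i) = x i := by
      intro i
      have hbase : base σ (σ i) = base σ i := base_apply σ i
      set p := base σ i with hp
      simp only [hx, hbase]
      by_cases hcp : cycleProd (fun i => (γ i : ℍ)) σ p = 1
      · -- the units computation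
        have hℓpos := minimalPeriod_pos σ p
        have hℓfix := pow_minimalPeriod_apply σ p
        have h1 : prefU σ γ p (Function.minimalPeriod (⇑σ) p) = 1 := by
          apply Units.ext
          rw [← coe_prefU_minimalPeriod, hcp, Units.val_one]
        have hpow1 : (σ ^ kIdx σ (σ i)) p = (σ ^ (kIdx σ i + 1)) p := by
          have e1 : (σ ^ kIdx σ (σ i)) (base σ (σ i)) = σ i := kIdx_spec σ (σ i)
          rw [hbase] at e1
          rw [e1, pow_add_apply, pow_one, kIdx_spec]
        have hmod : kIdx σ (σ i) % Function.minimalPeriod (⇑σ) p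
            = (kIdx σ i + 1) % Function.minimalPeriod (⇑σ) p :=
          mod_eq_of_pow_apply_eq σ hpow1
        have hpref : prefU σ γ p (kIdx σ (σ i)) = prefU σ γ p (kIdx σ i) * γ i := by
          rw [← prefU_mod σ γ hℓpos hℓfix h1, hmod, prefU_mod σ γ hℓpos hℓfix h1,
            prefU_succ, kIdx_spec]
        have hkey : ((γ i : ℍ)) * ((prefU σ γ p (kIdx σ (σ i)))⁻¹ : ℍˣ)
            = (((prefU σ γ p (kIdx σ i))⁻¹ : ℍˣ) : ℍ) := by
          rw [hpref, mul_inv_rev, Units.val_mul, ← mul_assoc, ← Units.val_mul,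
            mul_inv_cancel, Units.val_one, one_mul]
        rw [← hp, ← mul_assoc, hkey]
      · have hV0 : V p = 0 := by
          rw [hV]
          exact dif_neg (fun h => hcp h.2)
        rw [← hp, hV0, mul_zero, mul_zero, mul_zero]
    refine ⟨⟨x, (mem_fixSpace_iff σ γ x).2 hxfix⟩, ?_⟩
    funext p
    show x p.1 = v p
    have hb : base σ p.1 = p.1 := base_eq_self σ p.2.1
    have hk : kIdx σ p.1 = 0 := by
      rw [kIdx, Nat.find_eq_zero]
      rw [pow_zero]
      simpa using hb
    simp only [hx, hb, hk, prefU_zero, inv_one, Units.val_one, one_mul, hV]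
    rw [dif_pos p.2]
  -- transport the rank
  let e2 : ℍ ≃ₗ[ℍᵐᵒᵖ] ℍᵐᵒᵖ :=
    { toFun := MulOpposite.op
      map_add' := fun a b => rfl
      map_smul' := fun c a => rfl
      invFun := MulOpposite.unop
      left_inv := fun a => rfl
      right_inv := fun a => rfl }
  let e : W ≃ₗ[ℍᵐᵒᵖ] (S → ℍᵐᵒᵖ) :=
    (LinearEquiv.ofBijective Φ ⟨hinj, hsurj⟩).trans
      (LinearEquiv.piCongrRight fun _ => e2)
  haveI : Fintype S := Fintype.ofFinite _
  rw [e.finrank_eq, Module.finrank_pi, Nat.card_eq_fintype_card]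
end
end

section
/- Fix a positive integer m. Let G and G' be finite groups with |G| = |G'| = m, let k ≥ 1, and let g ∈ G and g' ∈ G' be elements such that g = 1 if and only if g' = 1. Then the number of k-tuples (g₁,…,g_k) ∈ G^k with g_i ≠ 1 for all i and g₁g₂⋯g_k = g equals the number of k-tuples (g'₁,…,g'_k) ∈ (G')^k with g'_i ≠ 1 for all i and g'₁g'₂⋯g'_k = g'. In particular this count depends only on m, k, and whether the target element is the identity. -/
/-!
The count only sees `G` through its underlying set and the identity: peeling off the first
factor `h ≠ 1` leaves a factorization of `h⁻¹ * g` of length `k - 1`, and any bijection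
`G ≃ G'` can be corrected by two swaps to send `1 ↦ 1` and `g ↦ g'`. Such a bijection
matches the first factors and preserves whether the remaining target is `1`, so induction on
`k` yields a bijection between the sets of factorizations.
-/

abbrev Factorizations (G : Type*) [Group G] (k : ℕ) (g : G) : Type _ :=
  {t : Fin k → G // (∀ i, t i ≠ 1) ∧ (List.ofFn t).prod = g}

theorem Equiv.exists_apply_eq_and_apply_eq {α β : Type*} (e : α ≃ β) {a₁ a₂ : α} {b₁ b₂ : β}
    (h : a₁ = a₂ ↔ b₁ = b₂) : ∃ f : α ≃ β, f a₁ = b₁ ∧ f a₂ = b₂ := by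
  classical
  set e₁ := e.trans (Equiv.swap (e a₁) b₁)
  have he₁ : e₁ a₁ = b₁ := by simp [e₁]
  refine ⟨e₁.trans (Equiv.swap (e₁ a₂) b₂), ?_, by simp⟩
  -- The second swap fixes `b₁`: if `b₁ ≠ b₂`, then also `b₁ = e₁ a₁ ≠ e₁ a₂`.
  by_cases hb : b₁ = b₂
  · simp [he₁, ← h.mpr hb, hb]
  · have ha : b₁ ≠ e₁ a₂ := he₁ ▸ e₁.injective.ne (mt h.mp hb)
    simp [he₁, Equiv.swap_apply_of_ne_of_ne ha hb]

section Factorizations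

variable {G : Type*} [Group G]

def factorizationsZeroEquiv (g : G) : Factorizations G 0 g ≃ PLift (g = 1) where
  toFun t := ⟨by simpa [eq_comm] using t.2.2⟩
  invFun h := ⟨Fin.elim0, fun i => i.elim0, by simp [h.down]⟩
  left_inv t := Subsingleton.elim _ _
  right_inv h := rfl

def factorizationsSuccEquiv (k : ℕ) (g : G) :
    Factorizations G (k + 1) g ≃ Σ h : {h : G // h ≠ 1}, Factorizations G k ((h : G)⁻¹ * g) where
  toFun t := ⟨⟨t.1 0, t.2.1 0⟩, fun i => t.1 i.succ, fun i => t.2.1 i.succ, by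
    rw [eq_inv_mul_iff_mul_eq]; simpa [List.ofFn_succ] using t.2.2⟩
  invFun p := ⟨Fin.cons p.1.1 p.2.1, Fin.cases p.1.2 p.2.2.1, by
    simp [List.ofFn_succ, p.2.2.2]⟩
  left_inv t := Subtype.ext (Fin.cons_self_tail t.1)
  right_inv p := rfl

theorem nonempty_factorizations_equiv {G' : Type*} [Group G'] (e : G ≃ G') (k : ℕ) :
    ∀ (g : G) (g' : G'), (g = 1 ↔ g' = 1) →
      Nonempty (Factorizations G k g ≃ Factorizations G' k g') := by
  induction k with
  | zero =>
    intro g g' h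
    exact ⟨(factorizationsZeroEquiv g).trans <|
      (Equiv.plift.trans <| (Equiv.ofIff h).trans Equiv.plift.symm).trans
        (factorizationsZeroEquiv g').symm⟩
  | succ k ih =>
    intro g g' h
    obtain ⟨f, hf₁, hfg⟩ := e.exists_apply_eq_and_apply_eq (a₁ := 1) (b₁ := 1)
      (eq_comm.trans (h.trans eq_comm))
    have hrest (x : {x : G // x ≠ 1}) : (x : G)⁻¹ * g = 1 ↔ (f x)⁻¹ * g' = 1 := by
      rw [inv_mul_eq_one, inv_mul_eq_one, ← hfg, f.apply_eq_iff_eq]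
    let σ : {x : G // x ≠ 1} ≃ {x : G' // x ≠ 1} :=
      f.subtypeEquiv fun x => by rw [ne_eq, ne_eq, ← hf₁, f.apply_eq_iff_eq]
    exact ⟨(factorizationsSuccEquiv k g).trans <|
      (Equiv.sigmaCongr σ fun x => (ih _ _ (hrest x)).some).trans
        (factorizationsSuccEquiv k g').symm⟩

end Factorizations

theorem card_factorizations_depends_only_on_order_general (m : ℕ)
    (G G' : Type*) [Group G] [Group G'] [Finite G] [Finite G']
    (hG : Nat.card G = m) (hG' : Nat.card G' = m)
    (k : ℕ) (g : G) (g' : G') (h : g = 1 ↔ g' = 1) :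
    Nat.card {t : Fin k → G // (∀ i, t i ≠ 1) ∧ (List.ofFn t).prod = g} =
      Nat.card {t : Fin k → G' // (∀ i, t i ≠ 1) ∧ (List.ofFn t).prod = g'} := by
  obtain ⟨e⟩ := Finite.card_eq.mp (hG.trans hG'.symm)
  exact Nat.card_congr (nonempty_factorizations_equiv e k g g' h).some

/-- The number of `k`-tuples `(g₁,…,g_k)` of non-identity elements of a finite group `G`
with product a prescribed element `g` depends only on `|G|`, `k`, and whether `g = 1`. -/
theorem card_factorizations_depends_only_on_order (m : ℕ) (hm : 0 < m)
    (G G' : Type*) [Group G] [Group G'] [Finite G] [Finite G']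
    (hG : Nat.card G = m) (hG' : Nat.card G' = m)
    (k : ℕ) (hk : 1 ≤ k) (g : G) (g' : G') (h : g = 1 ↔ g' = 1) :
    Nat.card {t : Fin k → G // (∀ i, t i ≠ 1) ∧ (List.ofFn t).prod = g} =
      Nat.card {t : Fin k → G' // (∀ i, t i ≠ 1) ∧ (List.ofFn t).prod = g'} :=
  card_factorizations_depends_only_on_order_general m G G' hG hG' k g g' h
end

section
/- Let Γ ≤ ℍ^× be a finite subgroup with |Γ| = m and n ≥ 1, and let A be the finite hyperplane arrangement in ℍ^n consisting of the coordinate hyperplanes {x ∈ ℍ^n : x_i = 0} for 1 ≤ i ≤ n together with the hyperplanes {x ∈ ℍ^n : x_p = γ·x_q} for 1 ≤ p < q ≤ n and γ ∈ Γ. Then the Möbius function μ of the intersection lattice L(A) satisfies ∑_{X ∈ L(A)} (−1)^{codim_ℍ X} μ(X) · t^{codim_ℍ X} = ∏_{k=0}^{n−1} (1 + (1 + k·m)·t) in ℤ[t]. -/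
/-!
A finite-field-method count with formal points. Replace ℍ by the set `{0} ∪ Γ·{v₁, …, v_N}`
of formal coordinates, where the `v_a` are indeterminate vectors. Every flat of the arrangement
is cut out by a partial `Γ`-partition of the coordinates (each coordinate is `0` or `γ` times the
coordinate of its block representative), so a flat of dimension `d` contains exactly
`(1 + mN)^d` formal points. Every formal point spans a smallest flat, and Möbius inversion over
`L(A)` turns `∑ μ(Y) (1 + mN)^(dim Y)` into the number of formal points on no hyperplane, which
is `m^n N(N-1)⋯(N-n+1)`. As this holds for all `N`, `∑ μ(Y) t^(dim Y) = ∏ₖ (t - 1 - km)`,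
and the Poincaré polynomial is obtained by reversing and substituting `t ↦ -t`.
-/

noncomputable section

local notation "ℍ" => Quaternion ℝ

/-- The coordinate hyperplane `{x ∈ ℍⁿ : x i = 0}`, as a right ℍ-subspace. -/
def coordHyp {n : ℕ} (i : Fin n) : Submodule ℍᵐᵒᵖ (Fin n → ℍ) where
  carrier := {x | x i = 0}
  add_mem' := by
    intro a b ha hb
    simp only [Set.mem_setOf_eq] at *
    rw [Pi.add_apply, ha, hb, add_zero]
  zero_mem' := by simp
  smul_mem' := by
    intro c x hx
    simp only [Set.mem_setOf_eq] at *
    rw [Pi.smul_apply, hx, smul_zero]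

/-- The hyperplane `{x ∈ ℍⁿ : x p = γ·x q}`, as a right ℍ-subspace. -/
def diffHyp {n : ℕ} (p q : Fin n) (γ : ℍ) : Submodule ℍᵐᵒᵖ (Fin n → ℍ) where
  carrier := {x | x p = γ * x q}
  add_mem' := by
    intro a b ha hb
    simp only [Set.mem_setOf_eq] at *
    rw [Pi.add_apply, Pi.add_apply, ha, hb, mul_add]
  zero_mem' := by simp
  smul_mem' := by
    intro c x hx
    simp only [Set.mem_setOf_eq] at *
    rw [Pi.smul_apply, Pi.smul_apply, MulOpposite.smul_eq_mul_unop,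
      MulOpposite.smul_eq_mul_unop, hx, mul_assoc]

/-- The hyperplane arrangement of `W_n(Γ)`: the coordinate hyperplanes `{x i = 0}`
together with the hyperplanes `{x p = γ·x q}` for `p < q` and `γ ∈ Γ`. -/
def arrW (n : ℕ) (Γ : Subgroup ℍˣ) : Set (Submodule ℍᵐᵒᵖ (Fin n → ℍ)) :=
  {H | (∃ i : Fin n, H = coordHyp i) ∨
    ∃ p q : Fin n, p < q ∧ ∃ γ ∈ Γ, H = diffHyp p q (γ : ℍ)}

/-- The intersection lattice `L(A)` of the arrangement: all intersections of subsets of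
`A` (the empty intersection being `ℍⁿ = ⊤`). -/
def latW (n : ℕ) (Γ : Subgroup ℍˣ) : Set (Submodule ℍᵐᵒᵖ (Fin n → ℍ)) :=
  {X | ∃ S ⊆ arrW n Γ, X = sInf S}

section MobiusCounting

open Finset

variable {α : Type*}

theorem le_sInf_iff_sInf_le_sInf [CompleteLattice α] {A S : Set α} (hS : S ⊆ A) (a : α) :
    a ≤ sInf S ↔ sInf {H ∈ A | a ≤ H} ≤ sInf S :=
  ⟨fun h => sInf_le_sInf fun _ hH => ⟨hS hH, h.trans (sInf_le hH)⟩,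
    fun h => (le_sInf fun _ hH => hH.2).trans h⟩

variable [PartialOrder α] [OrderTop α] [DecidableLE α] {L : Finset α} {μ : α → ℤ}

theorem sum_filter_le_eq_ite [DecidableEq α] (htop : ⊤ ∈ L) (hμtop : μ ⊤ = 1)
    (hμ : ∀ X ∈ L, X ≠ ⊤ → ∑ Z ∈ L with X ≤ Z, μ Z = 0) {X : α} (hX : X ∈ L) :
    ∑ Z ∈ L with X ≤ Z, μ Z = if X = ⊤ then 1 else 0 := by
  split_ifs with h
  · subst h
    rw [filter_congr (fun Z _ => top_le_iff), filter_eq' L ⊤, if_pos htop, sum_singleton, hμtop]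
  · exact hμ X hX h

theorem sum_mul_card_closure_le {β : Type*} [Finite β] (htop : ⊤ ∈ L) (hμtop : μ ⊤ = 1)
    (hμ : ∀ X ∈ L, X ≠ ⊤ → ∑ Z ∈ L with X ≤ Z, μ Z = 0) (cl : β → α) (hcl : ∀ x, cl x ∈ L) :
    ∑ Y ∈ L, μ Y * Nat.card {x // cl x ≤ Y} = Nat.card {x // cl x = ⊤} := by
  classical
  have := Fintype.ofFinite β
  simp only [Nat.card_eq_fintype_card, Fintype.card_subtype]
  calc ∑ Y ∈ L, μ Y * #{x | cl x ≤ Y}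
      = ∑ x, ∑ Y ∈ L with cl x ≤ Y, μ Y := by
        simp only [card_filter, Nat.cast_sum, mul_sum, sum_filter]
        rw [sum_comm]
        simp
    _ = ∑ x, if cl x = ⊤ then 1 else 0 :=
        sum_congr rfl fun x _ => sum_filter_le_eq_ite htop hμtop hμ (hcl x)
    _ = #{x | cl x = ⊤} := by simp [sum_boole]

end MobiusCounting

theorem Subgroup.smul_eq_smul_iff_eq_zero {D : Type*} [DivisionRing D] {G : Subgroup Dˣ}
    {α β : G} (h : α ≠ β) {y : D} : α • y = β • y ↔ y = 0 := by
  have : ((α : Dˣ) : D) - (β : Dˣ) ≠ 0 :=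
    sub_ne_zero.2 fun h' => h (Subtype.ext (Units.ext h'))
  simp only [Subgroup.smul_def, Units.smul_def, smul_eq_mul]
  rw [← sub_eq_zero, ← sub_mul, mul_eq_zero, or_iff_right this]

/-- A partial `G`-partition of `Fin n`, recorded through block representatives: `σ i = none`
says `x i = 0`, and `σ i = some (j, g)` says `x i = g • x j`. It is normal when every such `j`
is a representative, i.e. `σ j = some (j, 1)`. -/
abbrev GPartition (n : ℕ) (G : Type*) := Fin n → Option (Fin n × G)

namespace GPartition

section Group

variable {n : ℕ} {G : Type*} {R : Type*}

def evalAt [Zero R] [SMul G R] (x : Fin n → R) (t : Option (Fin n × G)) : R :=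
  t.elim 0 fun p => p.2 • x p.1

def proj [Zero R] [SMul G R] (σ : GPartition n G) (x : Fin n → R) : Fin n → R :=
  fun i => evalAt x (σ i)

section SMul

variable [Zero R] [SMul G R]

@[simp] theorem evalAt_none (x : Fin n → R) : evalAt (G := G) x none = 0 := rfl

@[simp] theorem evalAt_some (x : Fin n → R) (j : Fin n) (g : G) :
    evalAt x (some (j, g)) = g • x j := rfl

theorem proj_map {S : Type*} [Zero S] [SMul G S] (σ : GPartition n G) (f : R → S)
    (hf0 : f 0 = 0) (hf : ∀ (g : G) r, f (g • r) = g • f r) (x : Fin n → R) :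
    σ.proj (fun i => f (x i)) = fun i => f (σ.proj x i) := by
  funext i
  simp only [proj]
  rcases σ i with _ | ⟨j, g⟩ <;> simp [hf0, hf]

end SMul

variable [Group G]

def IsTarget (σ : GPartition n G) (t : Option (Fin n × G)) : Prop :=
  ∀ ⦃j g⦄, t = some (j, g) → σ j = some (j, 1)

def IsNormal (σ : GPartition n G) : Prop := ∀ i, σ.IsTarget (σ i)

abbrev Rep (σ : GPartition n G) : Type := {j : Fin n // σ j = some (j, 1)}

def mulLabel (g : G) (t : Option (Fin n × G)) : Option (Fin n × G) :=
  t.map fun p => (p.1, g * p.2)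

section Action

variable [Zero R] [MulAction G R] {σ : GPartition n G}

theorem proj_apply_of_rep (x : Fin n → R) (j : σ.Rep) : σ.proj x j.1 = x j.1 := by
  simp [proj, j.2]

theorem proj_congr (hσ : σ.IsNormal) {x y : Fin n → R} (h : ∀ j : σ.Rep, x j.1 = y j.1) :
    σ.proj x = σ.proj y := by
  funext i
  rcases hi : σ i with _ | ⟨j, g⟩
  · simp [proj, hi]
  · simp [proj, hi, h ⟨j, hσ i hi⟩]

theorem proj_proj (hσ : σ.IsNormal) (x : Fin n → R) : σ.proj (σ.proj x) = σ.proj x :=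
  proj_congr hσ fun j => proj_apply_of_rep x j

def fixedEquiv (hσ : σ.IsNormal) : {x : Fin n → R // σ.proj x = x} ≃ (σ.Rep → R) where
  toFun x j := x.1 j.1
  invFun y := ⟨σ.proj (Function.extend Subtype.val y 0), proj_proj hσ _⟩
  left_inv x := Subtype.ext <| (proj_congr hσ fun j =>
    Subtype.val_injective.extend_apply (fun j : σ.Rep => x.1 j.1) 0 j).trans x.2
  right_inv y := funext fun j =>
    (proj_apply_of_rep _ j).trans (Subtype.val_injective.extend_apply y 0 j)

end Action

section Module

variable {K M : Type*} [Semiring K] [AddCommMonoid M] [DistribMulAction G M]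

theorem proj_add (σ : GPartition n G) (x y : Fin n → M) :
    σ.proj (x + y) = σ.proj x + σ.proj y := by
  funext i
  simp only [proj, Pi.add_apply]
  rcases σ i with _ | ⟨j, g⟩ <;> simp [smul_add]

variable [Module K M] [SMulCommClass G K M]

theorem proj_smul (σ : GPartition n G) (c : K) (x : Fin n → M) :
    σ.proj (c • x) = c • σ.proj x := by
  funext i
  simp only [proj, Pi.smul_apply]
  rcases σ i with _ | ⟨j, g⟩
  · simp
  · simp [smul_comm g c]

variable (K M) in
def subspace (σ : GPartition n G) : Submodule K (Fin n → M) where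
  carrier := {x | σ.proj x = x}
  add_mem' {x y} hx hy := (proj_add σ x y).trans (congrArg₂ _ hx hy)
  zero_mem' := by simpa using proj_smul (K := K) σ 0 (0 : Fin n → M)
  smul_mem' c x hx := (proj_smul σ c x).trans (congrArg _ hx)

variable {σ : GPartition n G}

theorem mem_subspace {x : Fin n → M} : x ∈ σ.subspace K M ↔ σ.proj x = x := Iff.rfl

def subspaceEquiv (hσ : σ.IsNormal) : σ.subspace K M ≃ₗ[K] (σ.Rep → M) where
  __ := fixedEquiv hσ
  map_add' _ _ := rfl
  map_smul' _ _ := rfl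

end Module

theorem finrank_subspace {D : Type*} [DivisionRing D] [DistribMulAction G D]
    [SMulCommClass G Dᵐᵒᵖ D] {σ : GPartition n G} (hσ : σ.IsNormal) :
    Module.finrank Dᵐᵒᵖ (σ.subspace Dᵐᵒᵖ D) = Nat.card σ.Rep := by
  classical
  rw [((subspaceEquiv hσ).trans (.piCongrRight fun _ => MulOpposite.opLinearEquiv Dᵐᵒᵖ)).finrank_eq,
    Module.finrank_fintype_fun_eq_card, Nat.card_eq_fintype_card]

section Redirect

def redirect (σ : GPartition n G) (r : Fin n) (t : Option (Fin n × G)) : GPartition n G :=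
  fun i => (σ i).bind fun p => if p.1 = r then mulLabel p.2 t else some p

variable {σ : GPartition n G} {r : Fin n} {t : Option (Fin n × G)}

theorem isTarget_none : σ.IsTarget none := fun _ _ h => nomatch h

theorem redirect_apply_of_ne {j : Fin n} (hj : σ j = some (j, 1)) (hjr : j ≠ r) :
    σ.redirect r t j = some (j, 1) := by
  simp [redirect, hj, hjr]

theorem isNormal_redirect (hσ : σ.IsNormal) (ht : σ.IsTarget t) (htr : ∀ g, t ≠ some (r, g)) :
    (σ.redirect r t).IsNormal := by
  intro i j g h
  rcases hi : σ i with _ | ⟨k, c⟩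
  · simp [redirect, hi] at h
  · by_cases hkr : k = r
    · subst hkr
      rcases t with _ | ⟨j', d⟩
      · simp [redirect, hi, mulLabel] at h
      · obtain ⟨rfl, -⟩ : j' = j ∧ c * d = g := by simpa [redirect, hi, mulLabel] using h
        exact redirect_apply_of_ne (ht rfl) fun hjk => htr d (by rw [hjk])
    · obtain ⟨rfl, -⟩ : k = j ∧ c = g := by simpa [redirect, hi, hkr] using h
      exact redirect_apply_of_ne (hσ i hi) hkr

variable {M : Type*} [AddMonoid M] [DistribMulAction G M] {x : Fin n → M}

theorem evalAt_mulLabel (g : G) (t : Option (Fin n × G)) :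
    evalAt x (mulLabel g t) = g • evalAt x t := by
  rcases t with _ | ⟨j, c⟩ <;> simp [mulLabel, mul_smul]

theorem proj_redirect (hx : x r = evalAt x t) : (σ.redirect r t).proj x = σ.proj x := by
  funext i
  simp only [proj, redirect]
  rcases σ i with _ | ⟨j, g⟩
  · rfl
  · by_cases hjr : j = r
    · simp [hjr, evalAt_mulLabel, hx]
    · simp [hjr]

theorem proj_redirect_eq_self_iff (hr : σ r = some (r, 1)) :
    (σ.redirect r t).proj x = x ↔ σ.proj x = x ∧ x r = evalAt x t := by
  have hxr : (σ.redirect r t).proj x r = evalAt x t := by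
    simp [proj, redirect, hr, evalAt_mulLabel]
  constructor
  · intro h
    have hx : x r = evalAt x t := (congrFun h r).symm.trans hxr
    exact ⟨(proj_redirect hx).symm.trans h, hx⟩
  · rintro ⟨h, hx⟩
    rw [proj_redirect hx, h]

theorem exists_isNormal_proj_eq_self_iff_of_rep (hσ : σ.IsNormal) (hr : σ r = some (r, 1))
    (ht : σ.IsTarget t) (htr : ∀ g, t ≠ some (r, g)) {P : (Fin n → M) → Prop}
    (hP : ∀ x, σ.proj x = x → (P x ↔ x r = evalAt x t)) :
    ∃ τ : GPartition n G, τ.IsNormal ∧ ∀ x, τ.proj x = x ↔ σ.proj x = x ∧ P x :=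
  ⟨σ.redirect r t, isNormal_redirect hσ ht htr, fun x => by
    rw [proj_redirect_eq_self_iff hr]
    exact and_congr_right fun h => (hP x h).symm⟩

end Redirect

end Group

section DivisionRing

variable {n : ℕ} {D : Type*} [DivisionRing D] {G : Subgroup Dˣ} {σ : GPartition n G}

/-- Cutting the subspace of `σ` by one more equation `evalAt x t = evalAt x t'` either changes
nothing, kills one block, or merges two blocks. -/
theorem exists_isNormal_proj_eq_self_iff (hσ : σ.IsNormal) {t t' : Option (Fin n × G)}
    (ht : σ.IsTarget t) (ht' : σ.IsTarget t') :
    ∃ τ : GPartition n G, τ.IsNormal ∧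
      ∀ x : Fin n → D, τ.proj x = x ↔ σ.proj x = x ∧ evalAt x t = evalAt x t' := by
  rcases t with _ | ⟨r, α⟩ <;> rcases t' with _ | ⟨s, β⟩
  · exact ⟨σ, hσ, by simp⟩
  · refine exists_isNormal_proj_eq_self_iff_of_rep hσ (ht' rfl) isTarget_none (by simp)
      fun x _ => ?_
    simp [eq_comm (a := (0 : D)), smul_eq_zero_iff_eq]
  · refine exists_isNormal_proj_eq_self_iff_of_rep hσ (ht rfl) isTarget_none (by simp)
      fun x _ => ?_
    simp [smul_eq_zero_iff_eq]
  · by_cases hrs : r = s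
    · subst hrs
      by_cases hαβ : α = β
      · subst hαβ
        exact ⟨σ, hσ, by simp⟩
      · refine exists_isNormal_proj_eq_self_iff_of_rep hσ (ht rfl) isTarget_none (by simp)
          fun x _ => ?_
        simp [Subgroup.smul_eq_smul_iff_eq_zero hαβ]
    · refine exists_isNormal_proj_eq_self_iff_of_rep (t := some (r, β⁻¹ * α)) hσ (ht' rfl)
        (fun _ _ h => by cases h; exact ht rfl) (by simp [hrs]) fun x _ => ?_
      simp only [evalAt_some, mul_smul]
      rw [eq_inv_smul_iff, eq_comm]

end DivisionRing

end GPartition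

/-- A formal coordinate: `0`, or `g • v a` for a group element `g` and one of `N`
indeterminate vectors `v a`. -/
inductive FormalCoord (G : Type*) (N : ℕ)
  | zero
  | smulVec (g : G) (a : Fin N)

namespace FormalCoord

section Group

variable {G : Type*} {N : ℕ}

instance : Zero (FormalCoord G N) := ⟨zero⟩

def equivOption : FormalCoord G N ≃ Option (G × Fin N) where
  toFun
    | zero => none
    | smulVec g a => some (g, a)
  invFun
    | none => zero
    | some (g, a) => smulVec g a
  left_inv c := by cases c <;> rfl
  right_inv o := by rcases o with _ | ⟨g, a⟩ <;> rfl

instance [Finite G] : Finite (FormalCoord G N) := .of_equiv _ equivOption.symm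

theorem natCard [Finite G] : Nat.card (FormalCoord G N) = 1 + Nat.card G * N := by
  rw [Nat.card_congr equivOption, Finite.card_option, Nat.card_prod, Nat.card_fin, add_comm]

variable [Group G]

instance : MulAction G (FormalCoord G N) where
  smul g
    | zero => zero
    | smulVec h a => smulVec (g * h) a
  one_smul c := by
    cases c with
    | zero => rfl
    | smulVec h a => exact congrArg (smulVec · a) (one_mul h)
  mul_smul g h c := by
    cases c with
    | zero => rfl
    | smulVec k a => exact congrArg (smulVec · a) (mul_assoc g h k)

@[simp] theorem smul_smulVec (g h : G) (a : Fin N) :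
    g • smulVec h a = smulVec (g * h) a := rfl

theorem natCard_free [Finite G] {n : ℕ} :
    Nat.card {x : Fin n → FormalCoord G N //
      (∀ i, x i ≠ 0) ∧ ∀ p q, p ≠ q → ∀ γ : G, x p ≠ γ • x q} =
      Nat.card G ^ n * N.descFactorial n := by
  let f : (Fin n → G) × (Fin n ↪ Fin N) → (Fin n → FormalCoord G N) :=
    fun ga i => smulVec (ga.1 i) (ga.2 i)
  have hf : Function.Injective f := fun ga ga' h => by
    have h' i : ga.1 i = ga'.1 i ∧ ga.2 i = ga'.2 i := smulVec.inj (congrFun h i)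
    exact Prod.ext (funext fun i => (h' i).1) (DFunLike.ext _ _ fun i => (h' i).2)
  have hrange (x : Fin n → FormalCoord G N) : x ∈ Set.range f ↔
      (∀ i, x i ≠ 0) ∧ ∀ p q, p ≠ q → ∀ γ : G, x p ≠ γ • x q := by
    constructor
    · rintro ⟨ga, rfl⟩
      exact ⟨fun i h => (nomatch h), fun p q hpq γ h => hpq (ga.2.injective (smulVec.inj h).2)⟩
    · rintro ⟨h0, h1⟩
      have hx i : ∃ g a, x i = smulVec g a := by
        cases hxi : x i with
        | zero => exact absurd hxi (h0 i)
        | smulVec g a => exact ⟨g, a, rfl⟩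
      choose g a hga using hx
      refine ⟨(g, ⟨a, fun p q hpq => ?_⟩), funext fun i => (hga i).symm⟩
      by_contra hne
      refine h1 p q hne (g p * (g q)⁻¹) ?_
      rw [hga p, hga q, smul_smulVec, inv_mul_cancel_right, hpq]
  rw [← Nat.card_congr (Equiv.subtypeEquivRight hrange), Nat.card_range_of_injective hf,
    Nat.card_prod, Nat.card_fun, Nat.card_fin, Nat.card_eq_fintype_card (α := Fin n ↪ Fin N),
    Fintype.card_embedding_eq, Fintype.card_fin, Fintype.card_fin]

end Group

section DivisionRing

variable {n N : ℕ} {D : Type*} [DivisionRing D] {G : Subgroup Dˣ}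

def eval (v : Fin N → D) : FormalCoord G N → D
  | zero => 0
  | smulVec g a => g • v a

@[simp] theorem eval_zero (v : Fin N → D) : eval v (0 : FormalCoord G N) = 0 := rfl

theorem eval_smul (v : Fin N → D) (g : G) (c : FormalCoord G N) :
    eval v (g • c) = g • eval v c := by
  cases c with
  | zero => exact (smul_zero g).symm
  | smulVec h a => exact mul_smul g h (v a)

theorem eq_iff_forall_eval_eq {c c' : FormalCoord G N} :
    c = c' ↔ ∀ v : Fin N → D, eval v c = eval v c' := by
  refine ⟨fun h _ => h ▸ rfl, fun h => ?_⟩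
  have smul_one_ne_zero (g : G) : g • (1 : D) ≠ 0 := by simp [smul_eq_zero_iff_eq]
  cases c with
  | zero => cases c' with
    | zero => rfl
    | smulVec g' a' => exact absurd (h 1).symm (smul_one_ne_zero g')
  | smulVec g a => cases c' with
    | zero => exact absurd (h 1) (smul_one_ne_zero g)
    | smulVec g' a' =>
      by_cases ha : a = a'
      · subst ha
        have h1 : ((g : Dˣ) : D) = (g' : Dˣ) := by
          simpa [eval, Subgroup.smul_def, Units.smul_def] using h 1
        rw [Subtype.ext (Units.ext h1)]
      · have := h (Pi.single a 1)
        simp only [eval, Pi.single_eq_same, Pi.single_eq_of_ne' ha, smul_zero] at this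
        exact absurd this (smul_one_ne_zero g)

def span (x : Fin n → FormalCoord G N) : Submodule Dᵐᵒᵖ (Fin n → D) :=
  Submodule.span Dᵐᵒᵖ (Set.range fun v i => eval v (x i))

theorem span_le_iff {x : Fin n → FormalCoord G N} {Y : Submodule Dᵐᵒᵖ (Fin n → D)} :
    span x ≤ Y ↔ ∀ v, (fun i => eval v (x i)) ∈ Y := by
  rw [span, Submodule.span_le, Set.range_subset_iff]
  rfl

theorem span_le_subspace_iff {x : Fin n → FormalCoord G N} {σ : GPartition n G} :
    span x ≤ σ.subspace Dᵐᵒᵖ D ↔ σ.proj x = x := by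
  simp only [span_le_iff, GPartition.mem_subspace,
    σ.proj_map (eval _) (eval_zero _) (eval_smul _), funext_iff,
    eq_iff_forall_eval_eq (c := σ.proj x _)]
  exact forall_comm

end DivisionRing

end FormalCoord

section Arrangement

open GPartition

variable {n : ℕ} {Γ : Subgroup ℍˣ}

theorem exists_targets_of_mem_arrW {H : Submodule ℍᵐᵒᵖ (Fin n → ℍ)} (hH : H ∈ arrW n Γ)
    {σ : GPartition n Γ} (hσ : σ.IsNormal) :
    ∃ t t', σ.IsTarget t ∧ σ.IsTarget t' ∧
      ∀ x, σ.proj x = x → (x ∈ H ↔ evalAt x t = evalAt x t') := by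
  rcases hH with ⟨i, rfl⟩ | ⟨p, q, -, γ, hγ, rfl⟩
  · refine ⟨σ i, none, hσ i, isTarget_none, fun x hx => ?_⟩
    change x i = 0 ↔ _
    rw [← congrFun hx i, evalAt_none]
    rfl
  · refine ⟨σ p, mulLabel ⟨γ, hγ⟩ (σ q), hσ p, fun j g h => ?_, fun x hx => ?_⟩
    · obtain ⟨⟨j', g'⟩, hq, hj⟩ := Option.map_eq_some_iff.1 h
      cases hj
      exact hσ q hq
    · change x p = γ * x q ↔ _
      rw [evalAt_mulLabel, ← congrFun hx p, ← congrFun hx q]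
      rfl

theorem exists_isNormal_sInf_eq_subspace (S : Finset (Submodule ℍᵐᵒᵖ (Fin n → ℍ)))
    (hS : ↑S ⊆ arrW n Γ) :
    ∃ σ : GPartition n Γ, σ.IsNormal ∧ sInf (S : Set _) = σ.subspace ℍᵐᵒᵖ ℍ := by
  classical
  induction S using Finset.induction_on with
  | empty =>
    refine ⟨fun i => some (i, 1), fun i j g h => by cases h; rfl, ?_⟩
    ext x
    simp only [Finset.coe_empty, sInf_empty, Submodule.mem_top, true_iff]
    funext i
    exact one_smul _ (x i)
  | insert H S _ ih =>
    rw [Finset.coe_insert, Set.insert_subset_iff] at hS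
    obtain ⟨σ, hσ, hSσ⟩ := ih hS.2
    obtain ⟨t, t', ht, ht', hHσ⟩ := exists_targets_of_mem_arrW hS.1 hσ
    obtain ⟨τ, hτ, hτσ⟩ := exists_isNormal_proj_eq_self_iff hσ ht ht'
    refine ⟨τ, hτ, SetLike.ext fun x => ?_⟩
    rw [Finset.coe_insert, sInf_insert, hSσ, Submodule.mem_inf, mem_subspace, mem_subspace,
      hτσ]
    exact ⟨fun h => ⟨h.2, (hHσ x h.2).1 h.1⟩, fun h => ⟨(hHσ x h.1).2 h.2, h.1⟩⟩

variable [Finite Γ]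

theorem arrW_finite : (arrW n Γ).Finite := by
  refine ((Set.finite_range fun i : Fin n => coordHyp i).union
    (Set.finite_range fun t : Fin n × Fin n × Γ => diffHyp t.1 t.2.1 (t.2.2 : ℍˣ))).subset ?_
  rintro H (⟨i, rfl⟩ | ⟨p, q, -, γ, hγ, rfl⟩)
  · exact Or.inl ⟨i, rfl⟩
  · exact Or.inr ⟨(p, q, ⟨γ, hγ⟩), rfl⟩

theorem exists_isNormal_eq_subspace {X : Submodule ℍᵐᵒᵖ (Fin n → ℍ)} (hX : X ∈ latW n Γ) :
    ∃ σ : GPartition n Γ, σ.IsNormal ∧ X = σ.subspace ℍᵐᵒᵖ ℍ := by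
  obtain ⟨S, hS, rfl⟩ := hX
  obtain ⟨S, rfl⟩ := (arrW_finite.subset hS).exists_finset_coe
  exact exists_isNormal_sInf_eq_subspace S hS

theorem latW_finite : (latW n Γ).Finite :=
  (Set.finite_range fun σ : GPartition n Γ => σ.subspace ℍᵐᵒᵖ ℍ).subset fun _ hX =>
    let ⟨σ, _, hσ⟩ := exists_isNormal_eq_subspace hX
    ⟨σ, hσ.symm⟩

theorem finrank_le_of_mem_latW {X : Submodule ℍᵐᵒᵖ (Fin n → ℍ)} (hX : X ∈ latW n Γ) :
    Module.finrank ℍᵐᵒᵖ X ≤ n := by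
  obtain ⟨σ, hσ, rfl⟩ := exists_isNormal_eq_subspace hX
  rw [finrank_subspace hσ]
  simpa using Finite.card_subtype_le fun j => σ j = some (j, 1)

end Arrangement

section FormalPoints

open FormalCoord

variable {n N : ℕ} {Γ : Subgroup ℍˣ}

theorem FormalCoord.span_le_coordHyp_iff {x : Fin n → FormalCoord Γ N} {i : Fin n} :
    span x ≤ coordHyp i ↔ x i = 0 := by
  rw [span_le_iff, eq_iff_forall_eval_eq]
  rfl

theorem FormalCoord.span_le_diffHyp_iff {x : Fin n → FormalCoord Γ N} {p q : Fin n} (γ : Γ) :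
    span x ≤ diffHyp p q (γ : ℍˣ) ↔ x p = γ • x q := by
  simp only [span_le_iff, eq_iff_forall_eval_eq, eval_smul]
  rfl

def formalClosure (x : Fin n → FormalCoord Γ N) : Submodule ℍᵐᵒᵖ (Fin n → ℍ) :=
  sInf {H ∈ arrW n Γ | span x ≤ H}

theorem formalClosure_mem_latW (x : Fin n → FormalCoord Γ N) : formalClosure x ∈ latW n Γ :=
  ⟨_, fun _ hH => hH.1, rfl⟩

theorem formalClosure_le_iff {x : Fin n → FormalCoord Γ N} {Y : Submodule ℍᵐᵒᵖ (Fin n → ℍ)}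
    (hY : Y ∈ latW n Γ) : formalClosure x ≤ Y ↔ span x ≤ Y := by
  obtain ⟨S, hS, rfl⟩ := hY
  exact (le_sInf_iff_sInf_le_sInf hS _).symm

theorem coordHyp_ne_top (i : Fin n) : coordHyp i ≠ ⊤ := fun h => by
  have : (1 : Fin n → ℍ) ∈ coordHyp i := h ▸ Submodule.mem_top
  exact one_ne_zero (α := ℍ) this

theorem diffHyp_ne_top {p q : Fin n} (hpq : p ≠ q) (γ : ℍ) : diffHyp p q γ ≠ ⊤ := fun h => by
  have : Pi.single p (1 : ℍ) ∈ diffHyp p q γ := h ▸ Submodule.mem_top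
  simp [diffHyp, Pi.single_eq_of_ne' hpq] at this

theorem formalClosure_eq_top_iff {x : Fin n → FormalCoord Γ N} :
    formalClosure x = ⊤ ↔ (∀ i, x i ≠ 0) ∧ ∀ p q, p ≠ q → ∀ γ : Γ, x p ≠ γ • x q := by
  simp only [formalClosure, sInf_eq_top, Set.mem_ofPred_eq, and_imp]
  constructor
  · refine fun h => ⟨fun i hi => coordHyp_ne_top i
      (h _ (Or.inl ⟨i, rfl⟩) (span_le_coordHyp_iff.2 hi)), fun p q hpq γ he => ?_⟩
    rcases hpq.lt_or_gt with hlt | hgt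
    · exact diffHyp_ne_top hpq _
        (h _ (Or.inr ⟨p, q, hlt, _, γ.2, rfl⟩) ((span_le_diffHyp_iff γ).2 he))
    · exact diffHyp_ne_top hpq.symm _
        (h _ (Or.inr ⟨q, p, hgt, _, γ⁻¹.2, rfl⟩)
          ((span_le_diffHyp_iff γ⁻¹).2 (eq_inv_smul_iff.2 he.symm)))
  · rintro ⟨h0, h1⟩ H (⟨i, rfl⟩ | ⟨p, q, hpq, γ, hγ, rfl⟩) hle
    · exact absurd (span_le_coordHyp_iff.1 hle) (h0 i)
    · exact absurd ((span_le_diffHyp_iff ⟨γ, hγ⟩).1 hle) (h1 p q hpq.ne _)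

variable [Finite Γ]

theorem natCard_formalClosure_le {Y : Submodule ℍᵐᵒᵖ (Fin n → ℍ)} (hY : Y ∈ latW n Γ) :
    Nat.card {x : Fin n → FormalCoord Γ N // formalClosure x ≤ Y} =
      (1 + Nat.card Γ * N) ^ Module.finrank ℍᵐᵒᵖ Y := by
  obtain ⟨σ, hσ, rfl⟩ := exists_isNormal_eq_subspace hY
  rw [GPartition.finrank_subspace hσ, ← FormalCoord.natCard, ← Nat.card_fun]
  exact Nat.card_congr ((Equiv.subtypeEquivRight fun x =>
    (formalClosure_le_iff hY).trans span_le_subspace_iff).trans (GPartition.fixedEquiv hσ))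

theorem natCard_formalClosure_eq_top :
    Nat.card {x : Fin n → FormalCoord Γ N // formalClosure x = ⊤} =
      Nat.card Γ ^ n * N.descFactorial n := by
  rw [← FormalCoord.natCard_free]
  exact Nat.card_congr (Equiv.subtypeEquivRight fun x => formalClosure_eq_top_iff)

theorem sum_mul_pow_finrank_eq [DecidableLE (Submodule ℍᵐᵒᵖ (Fin n → ℍ))]
    {T : Finset (Submodule ℍᵐᵒᵖ (Fin n → ℍ))} (hT : ↑T = latW n Γ)
    {μ : Submodule ℍᵐᵒᵖ (Fin n → ℍ) → ℤ} (hμtop : μ ⊤ = 1)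
    (hμ : ∀ X ∈ T, X ≠ ⊤ → ∑ Z ∈ T with X ≤ Z, μ Z = 0) (N : ℕ) :
    ∑ Y ∈ T, μ Y * (1 + Nat.card Γ * N : ℤ) ^ Module.finrank ℍᵐᵒᵖ Y =
      Nat.card Γ ^ n * N.descFactorial n := by
  have hmem {Y} : Y ∈ T ↔ Y ∈ latW n Γ := by rw [← hT, Finset.mem_coe]
  calc ∑ Y ∈ T, μ Y * (1 + Nat.card Γ * N : ℤ) ^ Module.finrank ℍᵐᵒᵖ Y
      = ∑ Y ∈ T, μ Y * Nat.card {x : Fin n → FormalCoord Γ N // formalClosure x ≤ Y} :=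
        Finset.sum_congr rfl fun Y hY => by
          rw [natCard_formalClosure_le (hmem.1 hY)]
          push_cast
          rfl
    _ = Nat.card {x : Fin n → FormalCoord Γ N // formalClosure x = ⊤} :=
        sum_mul_card_closure_le (hmem.2 ⟨∅, Set.empty_subset _, sInf_empty.symm⟩) hμtop hμ _
          fun x => hmem.2 (formalClosure_mem_latW x)
    _ = Nat.card Γ ^ n * N.descFactorial n := by
      rw [natCard_formalClosure_eq_top]
      push_cast
      rfl

end FormalPoints

namespace Polynomial

variable {R : Type*} [CommRing R]

theorem reflect_C_mul_X_pow_comp_neg_X (a : R) {n d : ℕ} (hd : d ≤ n) :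
    (reflect n (C a * X ^ d)).comp (-X) = C ((-1) ^ (n - d) * a) * X ^ (n - d) := by
  rw [reflect_C_mul_X_pow, revAt_le hd, mul_comp, C_comp, X_pow_comp, neg_pow, C_mul, C_pow,
    C_neg, C_1]
  ring

theorem reflect_sum_C_mul_X_pow_comp_neg_X {ι : Type*} {n : ℕ} (s : Finset ι) (a : ι → R)
    (d : ι → ℕ) (hd : ∀ i ∈ s, d i ≤ n) :
    (reflect n (∑ i ∈ s, C (a i) * X ^ d i)).comp (-X) =
      ∑ i ∈ s, C ((-1) ^ (n - d i) * a i) * X ^ (n - d i) := by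
  let reflectHom : R[X] →+ R[X] := ⟨⟨reflect n, reflect_zero⟩, fun f g => reflect_add f g n⟩
  rw [show reflect n (∑ i ∈ s, C (a i) * X ^ d i) = ∑ i ∈ s, reflect n (C (a i) * X ^ d i) from
    map_sum reflectHom _ s, sum_comp]
  exact Finset.sum_congr rfl fun i hi => reflect_C_mul_X_pow_comp_neg_X (a i) (hd i hi)

theorem reflect_one_X_sub_C (c : R) : reflect 1 (X - C c) = 1 - C c * X := by
  have hlin : (X - C c : R[X]) = C 1 * X ^ 1 + C (-c) * X ^ 0 := by simp [sub_eq_add_neg]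
  rw [hlin, reflect_add, reflect_C_mul_X_pow, reflect_C_mul_X_pow, revAt_le le_rfl,
    revAt_le zero_le_one]
  simp only [C_1, C_neg, pow_zero, pow_one, mul_one, Nat.sub_self, Nat.sub_zero]
  ring

theorem reflect_prod_X_sub_C (c : ℕ → R) (n : ℕ) :
    reflect n (∏ k ∈ Finset.range n, (X - C (c k))) = ∏ k ∈ Finset.range n, (1 - C (c k) * X) := by
  induction n with
  | zero => rw [Finset.prod_range_zero, Finset.prod_range_zero, reflect_one, pow_zero]
  | succ n ih =>
    have hdeg : (∏ k ∈ Finset.range n, (X - C (c k))).natDegree ≤ n :=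
      (natDegree_prod_le _ _).trans
        ((Finset.sum_le_sum fun k _ => natDegree_X_sub_C_le (c k)).trans (by simp))
    rw [Finset.prod_range_succ, reflect_mul _ _ hdeg (natDegree_X_sub_C_le _), ih,
      reflect_one_X_sub_C, Finset.prod_range_succ]

theorem reflect_prod_X_sub_C_comp_neg_X (c : ℕ → R) (n : ℕ) :
    (reflect n (∏ k ∈ Finset.range n, (X - C (c k)))).comp (-X) =
      ∏ k ∈ Finset.range n, (1 + C (c k) * X) := by
  rw [reflect_prod_X_sub_C, prod_comp]
  simp [sub_eq_add_neg]

theorem eq_of_eval_one_add_mul_eq {P Q : ℤ[X]} {m : ℕ} (hm : m ≠ 0)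
    (h : ∀ N : ℕ, P.eval (1 + m * N : ℤ) = Q.eval (1 + m * N : ℤ)) : P = Q :=
  eq_of_infinite_eval_eq P Q <| Set.infinite_of_injective_forall_mem
    (fun N N' hN => by simpa [hm] using hN) h

end Polynomial

theorem prod_range_one_add_mul_sub (m N n : ℕ) :
    ∏ k ∈ Finset.range n, ((1 + m * N : ℤ) - (1 + k * m)) = m ^ n * N.descFactorial n := by
  calc ∏ k ∈ Finset.range n, ((1 + m * N : ℤ) - (1 + k * m))
      = ∏ k ∈ Finset.range n, (m * ((N : ℤ) - k)) :=
        Finset.prod_congr rfl fun k _ => by ring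
    _ = m ^ n * N.descFactorial n := by
      rw [Finset.prod_mul_distrib, Finset.prod_const, Finset.card_range,
        ← descPochhammer_eval_eq_prod_range, descPochhammer_eval_eq_descFactorial]

open Polynomial in
/-- For the reflection arrangement of `W_n(Γ)` with `|Γ| = m`, the characteristic
polynomial built from the Möbius function `μ` of the intersection lattice (normalized by
`μ(ℍⁿ) = 1` and `∑_{Z ⊇ X} μ(Z) = 0` for `X ≠ ℍⁿ`) satisfies
`∑_{X ∈ L(A)} (−1)^{codim X} μ(X) t^{codim X} = ∏_{k=0}^{n−1} (1 + (1 + k·m)·t)`. -/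
theorem poincare_polynomial_Wn_arrangement (n : ℕ) (Γ : Subgroup ℍˣ)
    (hΓ : (Γ : Set ℍˣ).Finite) (m : ℕ) (hm : Nat.card Γ = m)
    (μ : Submodule ℍᵐᵒᵖ (Fin n → ℍ) → ℤ)
    (hμtop : μ ⊤ = 1)
    (hμ : ∀ X ∈ latW n Γ, X ≠ ⊤ →
      ∑ᶠ Z ∈ {Z ∈ latW n Γ | X ≤ Z}, μ Z = 0) :
    ∑ᶠ Y ∈ latW n Γ,
        C ((-1) ^ (n - Module.finrank ℍᵐᵒᵖ Y) * μ Y) *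
          (X : ℤ[X]) ^ (n - Module.finrank ℍᵐᵒᵖ Y) =
      ∏ k ∈ Finset.range n, (1 + C (1 + (k : ℤ) * (m : ℤ)) * X) := by
  classical
  have : Finite Γ := hΓ.to_subtype
  set T := (latW_finite (n := n) (Γ := Γ)).toFinset
  have hT : (T : Set _) = latW n Γ := Set.Finite.coe_toFinset _
  have hmem {Y} : Y ∈ T ↔ Y ∈ latW n Γ := Set.Finite.mem_toFinset _
  have hTμ (X) (hX : X ∈ T) (hXtop : X ≠ ⊤) : ∑ Z ∈ T with X ≤ Z, μ Z = 0 := by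
    rw [← finsum_mem_coe_finset, Finset.coe_filter, ← hμ X (hmem.1 hX) hXtop, ← hT]
    rfl
  have hchar : ∑ Y ∈ T, C (μ Y) * X ^ Module.finrank ℍᵐᵒᵖ Y =
      ∏ k ∈ Finset.range n, (X - C (1 + (k : ℤ) * m)) := by
    subst hm
    refine eq_of_eval_one_add_mul_eq (Nat.card_pos (α := Γ)).ne' fun N => ?_
    simp only [eval_finsetSum, eval_mul, eval_C, eval_pow, eval_X, eval_prod, eval_sub]
    rw [sum_mul_pow_finrank_eq hT hμtop hTμ N, prod_range_one_add_mul_sub]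
  rw [← hT, finsum_mem_coe_finset, ← reflect_sum_C_mul_X_pow_comp_neg_X _ _ _
    fun Y hY => finrank_le_of_mem_latW (hmem.1 hY), hchar, reflect_prod_X_sub_C_comp_neg_X]
end
end
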